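/- arXiv:0904.4808 — 3 statements merged into one kernel-verified Lean document; each statement's English description precedes it below -/
import Mathlib

section
/- For every set E of positive integers there exist a countable additive abelian group G, a subgroup H of G, and a group automorphism v of G such that for every nonzero h ∈ H the set {v^i(h) : i ∈ ℤ} ∩ H is finite, and L(G,H,v) = E. -/
namespace S0

noncomputable def g (E : Set ℕ) (j : ℕ) : ℕ := open Classical in if j ∈ E then j else 1
noncomputable def m (E : Set ℕ) (n : ℕ) : ℕ := ∏ j ∈ Finset.range (n+1), g E j
noncomputable def Q (E : Set ℕ) (n : ℕ) : ℕ := ∏ j ∈ Finset.range n, g E j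

variable {E : Set ℕ}

lemma g_pos (hE : ∀ k ∈ E, 0 < k) (j : ℕ) : 0 < g E j := by
  unfold g; split
  · exact hE _ ‹_›
  · exact one_pos

lemma g_eq {j : ℕ} (h : j ∈ E) : g E j = j := by
  unfold g; split <;> tauto

lemma m_eq_Q_mul {n : ℕ} (h : n ∈ E) : m E n = Q E n * n := by
  rw [m, Q, Finset.prod_range_succ, g_eq h]

lemma Q_pos (hE : ∀ k ∈ E, 0 < k) (n : ℕ) : 0 < Q E n :=
  Finset.prod_pos fun j _ => g_pos hE j

lemma m_pos (hE : ∀ k ∈ E, 0 < k) (n : ℕ) : 0 < m E n :=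
  Finset.prod_pos fun j _ => g_pos hE j

lemma Q_dvd_Q {n n' : ℕ} (h : n ≤ n') : Q E n ∣ Q E n' :=
  Finset.prod_dvd_prod_of_subset _ _ _ (by
    intro j hj; simp only [Finset.mem_range] at *; omega)

lemma m_dvd_Q {n n' : ℕ} (h : n < n') : m E n ∣ Q E n' :=
  Finset.prod_dvd_prod_of_subset _ _ _ (by
    intro j hj; simp only [Finset.mem_range] at *; omega)

lemma m_dvd_m {n n' : ℕ} (h : n ≤ n') : m E n ∣ m E n' :=
  Finset.prod_dvd_prod_of_subset _ _ _ (by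
    intro j hj; simp only [Finset.mem_range] at *; omega)

lemma Q_dvd_m {n : ℕ} : Q E n ∣ m E n :=
  Finset.prod_dvd_prod_of_subset _ _ _ (by
    intro j hj; simp only [Finset.mem_range] at *; omega)

lemma Q_dvd_mQ {n n' : ℕ} (h : n ≤ n') : Q E n ∣ Q E n' := Q_dvd_Q h

instance (k : ℕ) : Countable (ZMod k) := by
  cases k
  · exact (inferInstance : Countable ℤ)
  · exact (inferInstance : Countable (Fin _))

variable (E)

abbrev Idx : Type := (n : {x : ℕ // x ∈ E}) × ZMod (m E n.1)
abbrev GG : Type := Idx E →₀ ℤ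

noncomputable def sh : Idx E ≃ Idx E where
  toFun a := ⟨a.1, a.2 + 1⟩
  invFun a := ⟨a.1, a.2 - 1⟩
  left_inv a := by simp
  right_inv a := by simp

noncomputable def v : AddAut (GG E) := (Finsupp.domCongr (sh E) : (Idx E →₀ ℤ) ≃+ (Idx E →₀ ℤ))

lemma v_apply (x : GG E) (a : Idx E) : (v E x) a = x ⟨a.1, a.2 - 1⟩ := rfl

lemma v_symm_apply (x : GG E) (a : Idx E) : ((-(v E)) x) a = x ⟨a.1, a.2 + 1⟩ := rfl

lemma vpow_apply (i : ℤ) (x : GG E) (a : Idx E) :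
    ((i • v E) x) a = x ⟨a.1, a.2 - (i : ZMod (m E a.1.1))⟩ := by
  induction i using Int.induction_on generalizing x a with
  | zero => simp
  | succ k ih =>
      have h1 : (((k : ℤ) + 1) • v E) x = ((k : ℤ) • v E) (v E x) := by
        rw [add_zsmul, one_zsmul]; rfl
      rw [h1, ih]
      rw [v_apply]
      push_cast
      ring_nf
  | pred k ih =>
      have h1 : (((-k : ℤ) - 1) • v E) x = ((-k : ℤ) • v E) ((-(v E)) x) := by
        rw [sub_zsmul, one_zsmul]; rfl
      rw [h1, ih]
      rw [v_symm_apply]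
      push_cast
      ring_nf

/-- grid + fiber-sum conditions -/
def Cond (x : GG E) : Prop :=
  ∀ (n : {k : ℕ // k ∈ E}) (z : ZMod (m E n.1)),
    (x ⟨n, z⟩ ≠ 0 → ZMod.castHom (Q_dvd_m (E := E) (n := n.1)) (ZMod (Q E n.1)) z = 0) ∧
    (∀ p : ℕ, p.Prime → p ∣ n.1 →
      ∑ s ∈ Finset.range p, x ⟨n, z + ((s * (m E n.1 / p) : ℕ) : ZMod (m E n.1))⟩ = 0)

noncomputable def HH : AddSubgroup (GG E) where
  carrier := {x | Cond E x}
  zero_mem' := by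
    intro n z
    exact ⟨fun h => by simp at h, fun p hp hpn => by simp⟩
  add_mem' := by
    intro x y hx hy n z
    refine ⟨fun hne => ?_, fun p hp hpn => ?_⟩
    · rcases (em (x ⟨n, z⟩ = 0)) with h0 | h0
      · have hy0 : y ⟨n, z⟩ ≠ 0 := by
          intro hy0; apply hne; simp [Finsupp.add_apply, h0, hy0]
        exact ((hy n z).1 hy0)
      · exact ((hx n z).1 h0)
    · have hx2 := (hx n z).2 p hp hpn
      have hy2 := (hy n z).2 p hp hpn
      simp only [Finsupp.add_apply]
      rw [Finset.sum_add_distrib, hx2, hy2, add_zero]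
  neg_mem' := by
    intro x hx n z
    refine ⟨fun hne => ?_, fun p hp hpn => ?_⟩
    · apply (hx n z).1; simpa using hne
    · have hx2 := (hx n z).2 p hp hpn
      simp only [Finsupp.neg_apply]
      rw [Finset.sum_neg_distrib, hx2, neg_zero]

lemma mem_HH_iff {x : GG E} : x ∈ HH E ↔ Cond E x := Iff.rfl

/-- Step A, ⟸ direction -/
lemma shift_mem (h : GG E) (hH : Cond E h) (i : ℤ)
    (hdvd : ∀ a ∈ h.support, (Q E a.1.1 : ℤ) ∣ i) : Cond E ((i • v E) h) := by
  intro n z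
  constructor
  · intro hne
    rw [vpow_apply] at hne
    have hsupp : (⟨n, z - (i : ZMod (m E n.1))⟩ : Idx E) ∈ h.support :=
      Finsupp.mem_support_iff.mpr hne
    have hQi : (Q E n.1 : ℤ) ∣ i := hdvd _ hsupp
    have h1 := (hH n (z - (i : ZMod (m E n.1)))).1 hne
    have h2 : (ZMod.castHom (Q_dvd_m (E := E) (n := n.1)) (ZMod (Q E n.1))
        ((i : ZMod (m E n.1)))) = 0 := by
      rw [map_intCast]
      exact (ZMod.intCast_zmod_eq_zero_iff_dvd i (Q E n.1)).mpr hQi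
    have : z = (z - (i : ZMod (m E n.1))) + (i : ZMod (m E n.1)) := by ring
    rw [this, map_add, h1, h2, add_zero]
  · intro p hp hpn
    have := (hH n (z - (i : ZMod (m E n.1)))).2 p hp hpn
    simp only [vpow_apply]
    rw [← this]
    apply Finset.sum_congr rfl
    intro s _
    have harg : z + ((s * (m E n.1 / p) : ℕ) : ZMod (m E n.1)) - (i : ZMod (m E n.1))
        = z - (i : ZMod (m E n.1)) + ((s * (m E n.1 / p) : ℕ) : ZMod (m E n.1)) := by ring
    rw [harg]

/-- Step A, ⟹ direction -/
lemma shift_mem_rev (h : GG E) (hH : Cond E h) (i : ℤ)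
    (hmem : Cond E ((i • v E) h)) (a : Idx E) (ha : a ∈ h.support) :
    (Q E a.1.1 : ℤ) ∣ i := by
  obtain ⟨n, w⟩ := a
  have hw : h ⟨n, w⟩ ≠ 0 := Finsupp.mem_support_iff.mp ha
  have h1 := (hH n w).1 hw
  have hne : ((i • v E) h) ⟨n, w + (i : ZMod (m E n.1))⟩ ≠ 0 := by
    rw [vpow_apply]
    simpa using hw
  have h2 := (hmem n (w + (i : ZMod (m E n.1)))).1 hne
  rw [map_add, h1, zero_add, map_intCast] at h2
  exact (ZMod.intCast_zmod_eq_zero_iff_dvd i (Q E n.1)).mp h2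

/-- Step B -/
lemma shift_eq (h : GG E) (i j : ℤ)
    (hdvd : ∀ a ∈ h.support, (m E a.1.1 : ℤ) ∣ (i - j)) :
    (i • v E) h = (j • v E) h := by
  ext a
  rw [vpow_apply, vpow_apply]
  by_cases hcase : ∃ b ∈ h.support, b.1 = a.1
  · obtain ⟨b, hb, hba⟩ := hcase
    have : (m E a.1.1 : ℤ) ∣ (i - j) := by rw [← hba]; exact hdvd b hb
    have hij : ((i : ZMod (m E a.1.1))) = (j : ZMod (m E a.1.1)) := by
      have := (ZMod.intCast_zmod_eq_zero_iff_dvd (i - j) (m E a.1.1)).mpr this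
      push_cast at this
      linear_combination this
    rw [hij]
  · push_neg at hcase
    have hz : ∀ w : ZMod (m E a.1.1), h ⟨a.1, w⟩ = 0 := by
      intro w
      by_contra hww
      exact hcase ⟨a.1, w⟩ (Finsupp.mem_support_iff.mpr hww) rfl
    rw [hz, hz]

/-- Step C: aperiodicity at a level with nonzero component -/
lemma top_aperiodic {E : Set ℕ} (hE : ∀ k ∈ E, 0 < k) (h : GG E) (hH : Cond E h)
    (n : {k : ℕ // k ∈ E}) (z₀ : ZMod (m E n.1)) (h0 : h ⟨n, z₀⟩ ≠ 0)
    (i : ℤ) (hQ : (Q E n.1 : ℤ) ∣ i)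
    (hper : ∀ z : ZMod (m E n.1), h ⟨n, z - (i : ZMod (m E n.1))⟩ = h ⟨n, z⟩) :
    (m E n.1 : ℤ) ∣ i := by
  by_contra hM
  have hKpos : 0 < (n.1) := hE _ n.2
  have hQKpos : 0 < (Q E n.1) := Q_pos hE _
  have hMeq : (m E n.1) = (Q E n.1) * (n.1) := m_eq_Q_mul n.2
  -- subgroup of periods
  let S : AddSubgroup ℤ := {
    carrier := {j : ℤ | ∀ z : ZMod (m E n.1), h ⟨n, z - (j : ZMod (m E n.1))⟩ = h ⟨n, z⟩}
    zero_mem' := by intro z; simp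
    add_mem' := by
      intro a b haa hbb z
      have h2 := haa (z - (b : ZMod (m E n.1)))
      have h1 := hbb z
      push_cast
      have harg : z - ((a : ZMod (m E n.1)) + (b : ZMod (m E n.1))) = (z - (b : ZMod (m E n.1))) - (a : ZMod (m E n.1)) := by
        ring
      rw [harg, h2, h1]
    neg_mem' := by
      intro a haa z
      have h2 := haa (z + (a : ZMod (m E n.1)))
      have harg : z + (a : ZMod (m E n.1)) - (a : ZMod (m E n.1)) = z := by ring
      rw [harg] at h2
      push_cast
      rw [sub_neg_eq_add, h2] }
  have hiS : i ∈ S := hper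
  obtain ⟨τ, rfl⟩ := hQ
  set e : ℕ := Int.gcd τ ((n.1) : ℤ) with hedef
  have heK : e ∣ (n.1) := Int.ofNat_dvd.mp (Int.gcd_dvd_right _ _)
  have hepos : 0 < e := by
    apply Int.gcd_pos_of_ne_zero_right
    exact_mod_cast hKpos.ne'
  -- ((Q E n.1) * e : ℤ) is a period
  have hdS : (((Q E n.1) * e : ℕ) : ℤ) ∈ S := by
    have hbez : (e : ℤ) = τ * Int.gcdA τ ((n.1) : ℤ) + ((n.1) : ℤ) * Int.gcdB τ ((n.1) : ℤ) :=
      Int.gcd_eq_gcd_ab τ ((n.1) : ℤ)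
    have : (((Q E n.1) * e : ℕ) : ℤ)
        = Int.gcdA τ ((n.1) : ℤ) * (((Q E n.1) : ℤ) * τ) + Int.gcdB τ ((n.1) : ℤ) * ((m E n.1) : ℤ) := by
      push_cast [hMeq]
      rw [hbez]
      ring
    rw [this]
    refine AddSubgroup.add_mem S ?_ ?_
    · have := AddSubgroup.zsmul_mem S hiS (Int.gcdA τ ((n.1) : ℤ))
      simpa [smul_eq_mul] using this
    · have hMS : ((m E n.1) : ℤ) ∈ S := by
        intro z
        have : (((m E n.1) : ℤ) : ZMod (m E n.1)) = 0 := by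
          push_cast
          simp [ZMod.natCast_self]
        rw [this, sub_zero]
      have := AddSubgroup.zsmul_mem S hMS (Int.gcdB τ ((n.1) : ℤ))
      simpa [smul_eq_mul] using this
  -- e < (n.1)
  have heltK : e < (n.1) := by
    rcases lt_or_eq_of_le (Nat.le_of_dvd hKpos heK) with hlt | heq
    · exact hlt
    · exfalso
      apply hM
      have : (((Q E n.1) * e : ℕ) : ℤ) ∣ ((Q E n.1) : ℤ) * τ := by
        have h1 : (e : ℤ) ∣ τ := Int.gcd_dvd_left _ _
        push_cast
        exact mul_dvd_mul_left _ h1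
      rw [heq] at this
      exact_mod_cast (by rw [hMeq] ; exact_mod_cast this : ((m E n.1):ℤ) ∣ ((Q E n.1):ℤ) * τ)
  -- find a prime q dividing (n.1) / e
  have hKe1 : (n.1) / e ≠ 1 := by
    intro h1
    have := Nat.div_mul_cancel heK
    rw [h1, one_mul] at this
    omega
  obtain ⟨q, hq, hqdvd⟩ := Nat.exists_prime_and_dvd hKe1
  obtain ⟨w, hw⟩ := hqdvd
  have hKew : (n.1) = e * (q * w) := by
    have := Nat.div_mul_cancel heK
    rw [hw] at this
    rw [← this]; ring
  have hqK : q ∣ (n.1) := ⟨e * w, by rw [hKew]; ring⟩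
  have hMq : (m E n.1) / q = (Q E n.1) * e * w := by
    have hM2 : (m E n.1) = q * ((Q E n.1) * e * w) := by rw [hMeq, hKew]; ring
    rw [hM2, Nat.mul_div_cancel_left _ hq.pos]
  -- every summand in the q-fiber sum equals h ⟨n, z⟩
  have hterm : ∀ (z : ZMod (m E n.1)) (s : ℕ),
      h ⟨n, z + ((s * ((m E n.1) / q) : ℕ) : ZMod (m E n.1))⟩ = h ⟨n, z⟩ := by
    intro z s
    have hj : ((s * ((m E n.1) / q) : ℕ) : ℤ) = (s * w : ℤ) * (((Q E n.1) * e : ℕ) : ℤ) := by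
      rw [hMq]; push_cast; ring
    have hjS : -((s * ((m E n.1) / q) : ℕ) : ℤ) ∈ S := by
      apply AddSubgroup.neg_mem
      rw [hj]
      have := AddSubgroup.zsmul_mem S hdS ((s * w : ℤ))
      simpa [smul_eq_mul] using this
    have hthis := hjS z
    generalize hN : s * ((m E n.1) / q) = N at *
    have harg : z - ((-(N : ℤ) : ℤ) : ZMod (m E n.1)) = z + ((N : ℕ) : ZMod (m E n.1)) := by
      push_cast
      ring
    rw [harg] at hthis
    exact hthis
  -- conclude: all values at level n vanish
  have hzero : ∀ z : ZMod (m E n.1), h ⟨n, z⟩ = 0 := by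
    intro z
    have hsum := (hH n z).2 q hq hqK
    have : ∑ s ∈ Finset.range q, h ⟨n, z + ((s * ((m E n.1) / q) : ℕ) : ZMod (m E n.1))⟩
        = (q : ℤ) * h ⟨n, z⟩ := by
      rw [Finset.sum_congr rfl (fun s _ => hterm z s)]
      simp [Finset.sum_const, Finset.card_range, mul_comm]
    rw [this] at hsum
    have hq0 : (q : ℤ) ≠ 0 := by exact_mod_cast hq.pos.ne'
    exact (mul_eq_zero.mp hsum).resolve_left hq0
  exact h0 (hzero z₀)

set_option maxHeartbeats 1000000 in
/-- main counting lemma -/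
lemma orbit_count {E : Set ℕ} (hE : ∀ k ∈ E, 0 < k) (h : GG E) (hH : h ∈ HH E) (hne : h ≠ 0) :
    ∃ K : ℕ, K ∈ E ∧ (∃ a ∈ h.support, (a.1.1 : ℕ) = K) ∧
      ({g : GG E | g ∈ HH E ∧ ∃ i : ℤ, g = (i • v E) h}).Finite ∧
      ({g : GG E | g ∈ HH E ∧ ∃ i : ℤ, g = (i • v E) h}).ncard = K := by
  have hsupp : h.support.Nonempty := Finsupp.support_nonempty_iff.mpr hne
  have hTne : (h.support.image (fun a => (a.1.1 : ℕ))).Nonempty := hsupp.image _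
  set T : Finset ℕ := h.support.image (fun a => (a.1.1 : ℕ)) with hT
  set K : ℕ := T.max' hTne with hK
  have hKT : K ∈ T := T.max'_mem hTne
  obtain ⟨atop, hatop, hlvl⟩ := Finset.mem_image.mp hKT
  have hKE : K ∈ E := by rw [← hlvl]; exact atop.1.2
  have hKmax : ∀ a ∈ h.support, (a.1.1 : ℕ) ≤ K := by
    intro a ha
    exact T.le_max' _ (Finset.mem_image_of_mem _ ha)
  have hKpos : 0 < K := hE _ hKE
  set F : ℤ → GG E := fun t => (((Q E K : ℤ) * t) • v E) h with hF
  have hFmem : ∀ t : ℤ, F t ∈ HH E := by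
    intro t
    apply shift_mem E h hH
    intro a ha
    exact Dvd.dvd.mul_right
      (Int.natCast_dvd_natCast.mpr (Q_dvd_Q (hKmax a ha))) t
  have hMQK : (m E K : ℤ) = (Q E K : ℤ) * (K : ℤ) := by
    exact_mod_cast congrArg Nat.cast (m_eq_Q_mul hKE)
  have hset : {g : GG E | g ∈ HH E ∧ ∃ i : ℤ, g = (i • v E) h}
      = F '' (Set.Ico (0:ℤ) (K:ℤ)) := by
    ext gg
    constructor
    · rintro ⟨hgH, i, rfl⟩
      have hQi : (Q E K : ℤ) ∣ i := by
        have := shift_mem_rev E h hH i hgH atop hatop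
        rwa [hlvl] at this
      obtain ⟨t, rfl⟩ := hQi
      refine ⟨t % K, ⟨Int.emod_nonneg t (by exact_mod_cast hKpos.ne'),
        Int.emod_lt_of_pos t (by exact_mod_cast hKpos)⟩, ?_⟩
      show (((Q E K : ℤ) * (t % K)) • v E) h = (((Q E K : ℤ) * t) • v E) h
      apply shift_eq
      intro a ha
      have hm1 : (m E a.1.1 : ℤ) ∣ (m E K : ℤ) :=
        Int.natCast_dvd_natCast.mpr (m_dvd_m (hKmax a ha))
      refine dvd_trans hm1 ?_
      have hid : (Q E K : ℤ) * (t % K) - (Q E K : ℤ) * t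
          = -(((Q E K : ℤ) * (K : ℤ)) * (t / K)) := by
        have h5 := Int.emod_add_mul_ediv t (K : ℤ)
        linear_combination (Q E K : ℤ) * h5
      rw [hid, hMQK]
      exact (Dvd.dvd.mul_right dvd_rfl _).neg_right
    · rintro ⟨t, _, rfl⟩
      exact ⟨hFmem t, (Q E K : ℤ) * t, rfl⟩
  have hinj : Set.InjOn F (Set.Ico (0:ℤ) (K:ℤ)) := by
    intro t ht t' ht' heq
    have hQQ : Q E atop.1.1 = Q E K := by rw [hlvl]
    have hmm2 : m E atop.1.1 = m E K := by rw [hlvl]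
    have hz0 : h ⟨atop.1, atop.2⟩ ≠ 0 := by
      have := Finsupp.mem_support_iff.mp hatop
      simpa using this
    have hper : ∀ z : ZMod (m E atop.1.1),
        h ⟨atop.1, z - (((Q E K : ℤ) * (t - t') : ℤ) : ZMod (m E atop.1.1))⟩
          = h ⟨atop.1, z⟩ := by
      intro z
      have h1 := congrArg
        (fun x : GG E => x ⟨atop.1, z + (((Q E K : ℤ) * t' : ℤ) : ZMod (m E atop.1.1))⟩) heq
      simp only [hF, vpow_apply] at h1
      have e1 : z + (((Q E K : ℤ) * t' : ℤ) : ZMod (m E atop.1.1))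
            - (((Q E K : ℤ) * t : ℤ) : ZMod (m E atop.1.1))
          = z - (((Q E K : ℤ) * (t - t') : ℤ) : ZMod (m E atop.1.1)) := by
        push_cast; ring
      have e2 : z + (((Q E K : ℤ) * t' : ℤ) : ZMod (m E atop.1.1))
            - (((Q E K : ℤ) * t' : ℤ) : ZMod (m E atop.1.1)) = z := by
        push_cast; ring
      rw [e1, e2] at h1
      exact h1
    have hdvd := top_aperiodic hE h hH atop.1 atop.2 hz0 ((Q E K : ℤ) * (t - t'))
      (by rw [hQQ]; exact Dvd.dvd.mul_right dvd_rfl _) hper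
    rw [hmm2, hMQK] at hdvd
    have hQne : (Q E K : ℤ) ≠ 0 := by exact_mod_cast (Q_pos hE K).ne'
    have hKdvd : (K : ℤ) ∣ (t - t') := by
      rcases hdvd with ⟨c, hc⟩
      refine ⟨c, ?_⟩
      apply mul_left_cancel₀ hQne
      linear_combination hc
    simp only [Set.mem_Ico] at ht ht'
    rcases hKdvd with ⟨c, hc⟩
    have hc0 : c = 0 := by
      rcases lt_trichotomy c 0 with h5 | h5 | h5
      · nlinarith [ht.1, ht.2, ht'.1, ht'.2]
      · exact h5
      · nlinarith [ht.1, ht.2, ht'.1, ht'.2]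
    rw [hc0, mul_zero] at hc
    linarith [hc]
  refine ⟨K, hKE, ⟨atop, hatop, hlvl⟩, ?_, ?_⟩
  · rw [hset]
    exact Set.Finite.image _ (Set.finite_Ico _ _)
  · rw [hset, Set.ncard_image_of_injOn hinj, ← Finset.coe_Ico, Set.ncard_coe_finset,
      Int.card_Ico]
    simp

section Witness

variable {E : Set ℕ} (nE : {k : ℕ // k ∈ E})

/-- position of the inclusion-exclusion witness -/
noncomputable def A (S : Finset ℕ) : ZMod (m E nE.1) :=
  ((Q E nE.1 * ∑ p ∈ S, nE.1 / p : ℕ) : ZMod (m E nE.1))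

/-- the witness element at level `nE` -/
noncomputable def wit : GG E :=
  ∑ S ∈ (nE.1.primeFactors).powerset,
    (-1:ℤ)^S.card • Finsupp.single (⟨nE, A nE S⟩ : Idx E) (1:ℤ)

lemma wit_apply_level (z : ZMod (m E nE.1)) :
    (wit nE) ⟨nE, z⟩ = ∑ S ∈ (nE.1.primeFactors).powerset,
      (-1:ℤ)^S.card * (if A nE S = z then 1 else 0) := by
  rw [wit, Finsupp.finset_sum_apply]
  apply Finset.sum_congr rfl
  intro S _
  rw [Finsupp.smul_apply, Finsupp.single_apply]
  have : ((⟨nE, A nE S⟩ : Idx E) = ⟨nE, z⟩) ↔ A nE S = z := by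
    constructor
    · intro hh
      have := (Sigma.mk.inj_iff.mp hh).2
      exact eq_of_heq this
    · intro hh; rw [hh]
  simp [this, smul_eq_mul]

lemma wit_apply_other (n' : {k : ℕ // k ∈ E}) (hne : n' ≠ nE) (z : ZMod (m E n'.1)) :
    (wit nE) ⟨n', z⟩ = 0 := by
  rw [wit, Finsupp.finset_sum_apply]
  apply Finset.sum_eq_zero
  intro S _
  rw [Finsupp.smul_apply, Finsupp.single_apply, if_neg, smul_zero]
  intro hcontra
  exact hne (congrArg Sigma.fst hcontra).symm

lemma A_empty : A nE (∅ : Finset ℕ) = 0 := by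
  simp [A]

lemma A_eq_zero_iff (hE : ∀ k ∈ E, 0 < k) (S : Finset ℕ) (hS : S ⊆ nE.1.primeFactors) :
    A nE S = 0 ↔ S = ∅ := by
  constructor
  · intro h0
    by_contra hSne
    obtain ⟨q, hq⟩ := Finset.nonempty_of_ne_empty hSne
    have hnpos : 0 < nE.1 := hE _ nE.2
    have hqpf := hS hq
    have hqprime : q.Prime := Nat.prime_of_mem_primeFactors hqpf
    have hqdvd : q ∣ nE.1 := Nat.dvd_of_mem_primeFactors hqpf
    haveI : NeZero (m E nE.1) := NeZero.of_pos (m_pos hE _)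
    have hm : (m E nE.1) ∣ Q E nE.1 * ∑ p ∈ S, nE.1 / p :=
      (ZMod.natCast_eq_zero_iff _ _).mp h0
    rw [m_eq_Q_mul nE.2] at hm
    have hndvd : nE.1 ∣ ∑ p ∈ S, nE.1 / p :=
      (mul_dvd_mul_iff_left (Q_pos hE nE.1).ne').mp hm
    set vq := nE.1.factorization q with hvq
    have hqv_dvd_n : q ^ vq ∣ nE.1 := Nat.ordProj_dvd _ _
    have hqv1_ndvd : ¬ q ^ (vq + 1) ∣ nE.1 :=
      Nat.pow_succ_factorization_not_dvd hnpos.ne' hqprime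
    -- q^vq divides every term n/p for p ∈ S.erase q
    have hterm : ∀ p ∈ S.erase q, q ^ vq ∣ nE.1 / p := by
      intro p hp
      have hpq : p ≠ q := Finset.ne_of_mem_erase hp
      have hppf := hS (Finset.mem_of_mem_erase hp)
      have hpprime : p.Prime := Nat.prime_of_mem_primeFactors hppf
      have hpdvd : p ∣ nE.1 := Nat.dvd_of_mem_primeFactors hppf
      have hco : (q ^ vq).Coprime p :=
        Nat.Coprime.pow_left _ (((Nat.coprime_primes hqprime hpprime).mpr (hpq.symm)))
      apply hco.dvd_of_dvd_mul_right
      rw [Nat.div_mul_cancel hpdvd]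
      exact hqv_dvd_n
    have hsum_split : ∑ p ∈ S, nE.1 / p = nE.1 / q + ∑ p ∈ S.erase q, nE.1 / p :=
      (Finset.add_sum_erase S _ hq).symm
    have hqv_sum : q ^ vq ∣ ∑ p ∈ S, nE.1 / p :=
      dvd_trans hqv_dvd_n hndvd
    have hqv_rest : q ^ vq ∣ ∑ p ∈ S.erase q, nE.1 / p :=
      Finset.dvd_sum hterm
    have hqv_nq : q ^ vq ∣ nE.1 / q := by
      have : q ^ vq ∣ nE.1 / q + ∑ p ∈ S.erase q, nE.1 / p := by
        rw [← hsum_split]; exact hqv_sum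
      exact (Nat.dvd_add_right hqv_rest).mp (by rwa [add_comm] at this)
    apply hqv1_ndvd
    have : q ^ vq * q ∣ (nE.1 / q) * q := mul_dvd_mul hqv_nq dvd_rfl
    rwa [Nat.div_mul_cancel hqdvd, ← pow_succ] at this
  · intro h; subst h; exact A_empty nE

lemma wit_ne_zero (hE : ∀ k ∈ E, 0 < k) : wit nE ≠ 0 := by
  intro hcontra
  have h0 : (wit nE) ⟨nE, A nE ∅⟩ = 1 := by
    rw [wit_apply_level]
    rw [Finset.sum_eq_single (∅ : Finset ℕ)]
    · simp
    · intro S hS hSne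
      rw [if_neg, mul_zero]
      intro hAS
      rw [A_empty] at hAS
      exact hSne ((A_eq_zero_iff nE hE S (Finset.mem_powerset.mp hS)).mp hAS)
    · intro hcon
      exact absurd (Finset.empty_mem_powerset _) hcon
  rw [hcontra] at h0
  simp at h0

lemma wit_mem (hE : ∀ k ∈ E, 0 < k) : Cond E (wit nE) := by
  have hnpos : 0 < nE.1 := hE _ nE.2
  intro n' z
  by_cases hcase : n' = nE
  · subst hcase
    constructor
    · intro hne
      rw [wit_apply_level] at hne
      have : ∃ S ∈ (n'.1.primeFactors).powerset, A n' S = z := by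
        by_contra hall
        push_neg at hall
        apply hne
        apply Finset.sum_eq_zero
        intro S hS
        rw [if_neg (hall S hS), mul_zero]
      obtain ⟨S, _, hAS⟩ := this
      rw [← hAS]
      show (ZMod.castHom _ (ZMod (Q E n'.1)) ((Q E n'.1 * ∑ p ∈ S, n'.1 / p : ℕ) : ZMod (m E n'.1))) = 0
      rw [map_natCast]
      haveI : NeZero (Q E n'.1) := NeZero.of_pos (Q_pos hE _)
      exact (ZMod.natCast_eq_zero_iff _ _).mpr ⟨_, rfl⟩
    · intro p hp hpn
      have hppf : p ∈ n'.1.primeFactors :=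
        Nat.mem_primeFactors.mpr ⟨hp, hpn, hnpos.ne'⟩
      have hpm : p ∣ m E n'.1 := dvd_trans hpn ⟨Q E n'.1, by rw [m_eq_Q_mul n'.2]; ring⟩
      -- rewrite each summand via wit_apply_level and swap sums
      have hswap : ∑ s ∈ Finset.range p,
          (wit n') ⟨n', z + ((s * (m E n'.1 / p) : ℕ) : ZMod (m E n'.1))⟩
          = ∑ S ∈ (n'.1.primeFactors).powerset, (-1:ℤ)^S.card *
              ∑ s ∈ Finset.range p,
                (if A n' S = z + ((s * (m E n'.1 / p) : ℕ) : ZMod (m E n'.1)) then 1 else 0) := by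
        rw [Finset.sum_congr rfl (fun s _ => wit_apply_level n' _)]
        rw [Finset.sum_comm]
        apply Finset.sum_congr rfl
        intro S _
        rw [Finset.mul_sum]
      rw [hswap]
      -- pair subsets by membership of p
      have hPsplit : n'.1.primeFactors = insert p (n'.1.primeFactors.erase p) :=
        (Finset.insert_erase hppf).symm
      rw [hPsplit, Finset.sum_powerset_insert (Finset.notMem_erase _ _)]
      rw [← Finset.sum_add_distrib]
      apply Finset.sum_eq_zero
      intro S hS
      have hpS : p ∉ S := fun hin => Finset.notMem_erase p _ (Finset.mem_powerset.mp hS hin)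
      have hcard : (insert p S).card = S.card + 1 := Finset.card_insert_of_notMem hpS
      -- the two inner counts agree
      have hNeq : (∑ s ∈ Finset.range p,
            (if A n' S = z + ((s * (m E n'.1 / p) : ℕ) : ZMod (m E n'.1)) then (1:ℤ) else 0))
          = ∑ s ∈ Finset.range p,
            (if A n' (insert p S) = z + ((s * (m E n'.1 / p) : ℕ) : ZMod (m E n'.1)) then (1:ℤ) else 0) := by
        have hAins : A n' (insert p S) = A n' S + ((m E n'.1 / p : ℕ) : ZMod (m E n'.1)) := by
          rw [A, A, Finset.sum_insert hpS]
          have harith : Q E n'.1 * (n'.1 / p + ∑ q ∈ S, n'.1 / q)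
              = Q E n'.1 * ∑ q ∈ S, n'.1 / q + m E n'.1 / p := by
            have hmp : m E n'.1 / p = Q E n'.1 * (n'.1 / p) := by
              rw [m_eq_Q_mul n'.2, Nat.mul_div_assoc _ hpn]
            rw [hmp]; ring
          rw [harith]
          push_cast
          ring
        set G2 : ℕ → ℤ := fun s =>
          (if A n' (insert p S) = z + ((s * (m E n'.1 / p) : ℕ) : ZMod (m E n'.1)) then (1:ℤ) else 0)
          with hG2
        have hshift : ∀ s : ℕ, G2 (s + 1)
            = (if A n' S = z + ((s * (m E n'.1 / p) : ℕ) : ZMod (m E n'.1)) then (1:ℤ) else 0) := by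
          intro s
          rw [hG2]
          simp only []
          have hcast : (((s+1) * (m E n'.1 / p) : ℕ) : ZMod (m E n'.1))
              = ((s * (m E n'.1 / p) : ℕ) : ZMod (m E n'.1)) + ((m E n'.1 / p : ℕ) : ZMod (m E n'.1)) := by
            push_cast; ring
          rw [hcast, hAins]
          congr 1
          rw [eq_iff_iff]
          constructor
          · intro hh
            linear_combination hh
          · intro hh
            linear_combination hh
        have hG2p : G2 p = G2 0 := by
          rw [hG2]
          simp only []
          rw [Nat.mul_div_cancel' hpm, ZMod.natCast_self, add_zero, Nat.zero_mul,
            Nat.cast_zero, add_zero]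
        calc (∑ s ∈ Finset.range p,
              (if A n' S = z + ((s * (m E n'.1 / p) : ℕ) : ZMod (m E n'.1)) then (1:ℤ) else 0))
            = ∑ s ∈ Finset.range p, G2 (s+1) := by
              rw [Finset.sum_congr rfl fun s _ => (hshift s).symm]
          _ = ∑ s ∈ Finset.range p, G2 s := by
              have h1 := Finset.sum_range_succ' G2 p
              have h2 := Finset.sum_range_succ G2 p
              rw [h2] at h1
              linarith [hG2p]
      rw [← hNeq, hcard]
      ring

  · constructor
    · intro hne
      exact absurd (wit_apply_other nE n' hcase z) hne
    · intro p hp hpn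
      apply Finset.sum_eq_zero
      intro s _
      exact wit_apply_other nE n' hcase _

end Witness

end S0


/-- For every set `E` of positive integers there exist a countable additive
abelian group `G`, a subgroup `H` of `G`, and a group automorphism `v` of `G` such that for
every nonzero `h ∈ H` the set `{v^i(h) : i ∈ ℤ} ∩ H` is finite, and `L(G,H,v) = E`, where
`L(G,H,v) := { n ∈ ℕ : ∃ h ∈ H, h ≠ 0, the set {g ∈ H : ∃ i : ℤ, g = v^i(h)} is finite with
exactly n elements }`. -/
theorem stmt_0 (E : Set ℕ) (hE : ∀ n ∈ E, 0 < n) :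
    ∃ (G : Type) (_ : AddCommGroup G) (_ : Countable G)
      (H : AddSubgroup G) (v : AddAut G),
      (∀ h ∈ H, h ≠ 0 →
        ({g : G | g ∈ H ∧ ∃ i : ℤ, g = (i • v) h}).Finite) ∧
      {n : ℕ | ∃ h ∈ H, h ≠ 0 ∧
          ({g : G | g ∈ H ∧ ∃ i : ℤ, g = (i • v) h}).Finite ∧
          ({g : G | g ∈ H ∧ ∃ i : ℤ, g = (i • v) h}).ncard = n} = E := by
  refine ⟨S0.GG E, inferInstance, inferInstance, S0.HH E, S0.v E, ?_, ?_⟩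
  · intro h hH hne
    obtain ⟨K, _, _, hfin, _⟩ := S0.orbit_count hE h hH hne
    exact hfin
  · ext n
    simp only [Set.mem_setOf_eq]
    constructor
    · rintro ⟨h, hH, hne, hfin, hcard⟩
      obtain ⟨K, hKE, _, _, hcard'⟩ := S0.orbit_count hE h hH hne
      have : n = K := by rw [← hcard, hcard']
      rwa [this]
    · intro hn
      have hwitmem := S0.wit_mem (⟨n, hn⟩ : {k : ℕ // k ∈ E}) hE
      have hwitne := S0.wit_ne_zero (⟨n, hn⟩ : {k : ℕ // k ∈ E}) hE
      refine ⟨S0.wit ⟨n, hn⟩, hwitmem, hwitne, ?_⟩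
      obtain ⟨K, hKE, ⟨a, ha, hlvl⟩, hfin, hcard⟩ :=
        S0.orbit_count hE _ hwitmem hwitne
      have haK : a.1 = (⟨n, hn⟩ : {k : ℕ // k ∈ E}) := by
        by_contra hcontra
        exact Finsupp.mem_support_iff.mp ha
          (S0.wit_apply_other (⟨n, hn⟩ : {k : ℕ // k ∈ E}) a.1 hcontra a.2)
      have hKn : K = n := by rw [← hlvl, haK]
      rw [hKn] at hcard
      exact ⟨hfin, hcard⟩
end

section
/- For every nonempty set E of positive integers there exists a subgroup H of G₂ such that for every nonzero h ∈ H the set {σ^i(h) : i ∈ ℤ} ∩ H is finite, and L(G₂,H,σ) = E. -/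
abbrev Gtwo : Type := ℤ →₀ ZMod 2

def shiftAut : AddAut Gtwo := Finsupp.domCongr (Equiv.subRight (1 : ℤ))

lemma shiftAut_apply (g : Gtwo) (i : ℤ) : shiftAut g i = g (i + 1) := rfl

noncomputable section

open Classical

def sh (j : ℤ) (x : Gtwo) : Gtwo := (j • shiftAut) x

lemma shiftAut_inv_apply (g : Gtwo) (i : ℤ) : (-shiftAut) g i = g (i - 1) := by
  rw [AddAut.neg_def]
  have h2 : shiftAut (shiftAut.symm g) = g := shiftAut.apply_symm_apply g
  have := shiftAut_apply (shiftAut.symm g) (i - 1)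
  rw [sub_add_cancel] at this
  rw [← this, h2]

lemma sh_apply (j : ℤ) (x : Gtwo) (i : ℤ) : sh j x i = x (i + j) := by
  induction j using Int.induction_on generalizing x i with
  | zero => simp [sh]
  | succ k ih =>
      have h : sh ((k : ℤ) + 1) x = ((k:ℤ) • shiftAut) (shiftAut x) := by
        rw [sh, add_one_zsmul, AddAut.add_apply]
      rw [h]
      have h2 := ih (shiftAut x) i
      rw [sh] at h2
      rw [h2, shiftAut_apply]
      ring_nf
  | pred k ih =>
      have h : sh (-(k : ℤ) - 1) x = ((-(k:ℤ)) • shiftAut) ((-shiftAut) x) := by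
        rw [sh, sub_one_zsmul, AddAut.add_apply]
      rw [h]
      have h2 := ih ((-shiftAut) x) i
      rw [sh] at h2
      rw [h2, shiftAut_inv_apply]
      ring_nf

lemma sh_add (j j' : ℤ) (x : Gtwo) : sh (j + j') x = sh j (sh j' x) := by
  ext i; simp [sh_apply]; ring_nf

lemma sh_zero (x : Gtwo) : sh 0 x = x := by ext i; simp [sh_apply]

lemma sh_add_apply (j : ℤ) (x y : Gtwo) : sh j (x + y) = sh j x + sh j y := by
  ext i; simp [sh_apply]

lemma sh_eq_zero_iff (j : ℤ) (x : Gtwo) : sh j x = 0 ↔ x = 0 := by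
  constructor
  · intro h; ext i
    have := congrArg (fun z => z (i - j)) h
    simpa [sh_apply, sub_add_cancel] using this
  · intro h; subst h; ext i; simp [sh_apply]

lemma sh_inj {j : ℤ} {x y : Gtwo} (h : sh j x = sh j y) : x = y := by
  ext i
  have := congrArg (fun z => z (i - j)) h
  simpa [sh_apply, sub_add_cancel] using this

end

noncomputable section
open Classical

lemma zmod2_add_ne (a b : ZMod 2) : a + b ≠ 0 ↔ a ≠ b := by revert a b; decide

lemma gtwo_neg (x : Gtwo) : -x = x := by
  ext i; change (-x) i = x i
  rw [Finsupp.neg_apply]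
  exact CharTwo.neg_eq _

lemma gtwo_add_self (x : Gtwo) : x + x = 0 := by
  nth_rewrite 1 [← gtwo_neg x]
  rw [neg_add_cancel]

/-- maximal point of the support of a nonzero element -/
def mx (x : Gtwo) (hx : x ≠ 0) : ℤ :=
  x.support.max' (Finsupp.support_nonempty_iff.mpr hx)

lemma mx_mem {x : Gtwo} (hx : x ≠ 0) : x (mx x hx) ≠ 0 := by
  have := x.support.max'_mem (Finsupp.support_nonempty_iff.mpr hx)
  exact Finsupp.mem_support_iff.mp this

lemma le_mx {x : Gtwo} (hx : x ≠ 0) {i : ℤ} (hi : x i ≠ 0) : i ≤ mx x hx :=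
  x.support.le_max' i (Finsupp.mem_support_iff.mpr hi)

lemma sh_aperiodic {x : Gtwo} (hx : x ≠ 0) {j : ℤ} (h : sh j x = x) : j = 0 := by
  have h1 : x (mx x hx + j) ≠ 0 := by
    have := congrArg (fun z => z (mx x hx)) h
    simp only [sh_apply] at this
    rw [this]; exact mx_mem hx
  have h2 : x (mx x hx - j) ≠ 0 := by
    have := congrArg (fun z => z (mx x hx - j)) h
    simp only [sh_apply, sub_add_cancel] at this
    rw [← this]; exact mx_mem hx
  have := le_mx hx h1
  have := le_mx hx h2
  omega

/-- shift-equivalence -/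
def R (x y : Gtwo) : Prop := ∃ j : ℤ, sh j x = y

lemma R_refl (x : Gtwo) : R x x := ⟨0, sh_zero x⟩

lemma R_symm {x y : Gtwo} (h : R x y) : R y x := by
  obtain ⟨j, rfl⟩ := h
  exact ⟨-j, by rw [← sh_add]; simp [sh_zero]⟩

lemma R_trans {x y z : Gtwo} (h : R x y) (h' : R y z) : R x z := by
  obtain ⟨j, rfl⟩ := h; obtain ⟨j', rfl⟩ := h'
  exact ⟨j' + j, by rw [sh_add]⟩

lemma R_sh (j : ℤ) (x : Gtwo) : R x (sh j x) := ⟨j, rfl⟩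

/-- the unique witness shift when x ≠ 0 -/
lemma R_unique {x : Gtwo} (hx : x ≠ 0) {j j' : ℤ} (h : sh j x = sh j' x) : j = j' := by
  have h2 : sh (-j' + j) x = x := by
    have := congrArg (sh (-j')) h
    rw [← sh_add, ← sh_add] at this
    simpa [sh_zero] using this
  have := sh_aperiodic hx h2
  omega

end

noncomputable section
open Classical

def SGrp (V : Finset Gtwo) : Prop := (0:Gtwo) ∈ V ∧ ∀ x ∈ V, ∀ y ∈ V, x + y ∈ V

def Bdd (V : Finset Gtwo) (B : ℤ) : Prop := ∀ x ∈ V, ∀ i, x i ≠ 0 → 0 ≤ i ∧ i ≤ B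

def addElt (V : Finset Gtwo) (v : Gtwo) : Finset Gtwo := V ∪ V.image (· + v)

lemma mem_addElt {V : Finset Gtwo} {v x : Gtwo} :
    x ∈ addElt V v ↔ x ∈ V ∨ ∃ w ∈ V, x = w + v := by
  simp only [addElt, Finset.mem_union, Finset.mem_image]
  apply or_congr_right
  constructor
  · rintro ⟨w, hw, h⟩; exact ⟨w, hw, h.symm⟩
  · rintro ⟨w, hw, h⟩; exact ⟨w, hw, h.symm⟩

lemma char2_rearrange (a b c d : ZMod 2) (h : a + b = c + d) : b + d = a + c := by
  revert a b c d; decide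

lemma char2_sum (a b c : ZMod 2) : a + b + (c + b) = a + c := by
  revert a b c; decide

lemma subset_addElt {V : Finset Gtwo} {v : Gtwo} : V ⊆ addElt V v :=
  fun x hx => mem_addElt.mpr (Or.inl hx)

lemma exists_ne_zero {v : Gtwo} (hv : v ≠ 0) : ∃ i, v i ≠ 0 := by
  by_contra h
  push_neg at h
  exact hv (by ext i; simp [h i])

section Gap

variable {V : Finset Gtwo} {B : ℤ} {v : Gtwo}
variable (hG : SGrp V) (hB : Bdd V B) (hB0 : 0 ≤ B) (hv : v ≠ 0)
variable (hL : ∀ i, v i ≠ 0 → 2*B+1 ≤ i)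

include hB hB0 hv hL in
lemma no_cross : ∀ w ∈ V, w ≠ 0 → ∀ y ∈ V, ∀ j, sh j y ≠ w + v := by
  intro w hw hw0 y hy j heq
  obtain ⟨i₁, hi₁⟩ := exists_ne_zero hw0
  obtain ⟨i₂, hi₂⟩ := exists_ne_zero hv
  have hwb := hB w hw i₁ hi₁
  have hvb := hL i₂ hi₂
  have h1 : (w + v) i₁ ≠ 0 := by
    have : v i₁ = 0 := by
      by_contra h; have := hL i₁ h; omega
    simpa [Finsupp.add_apply, this] using hi₁
  have h2 : (w + v) i₂ ≠ 0 := by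
    have : w i₂ = 0 := by
      by_contra h; have := hB w hw i₂ h; omega
    simpa [Finsupp.add_apply, this] using hi₂
  rw [← heq] at h1 h2
  rw [sh_apply] at h1 h2
  have b1 := hB y hy _ h1
  have b2 := hB y hy _ h2
  omega

include hB hB0 hv hL in
lemma v_not_mem : v ∉ V := by
  intro hmem
  obtain ⟨i₂, hi₂⟩ := exists_ne_zero hv
  have := hB v hmem i₂ hi₂
  have := hL i₂ hi₂
  omega

include hG hB hB0 hv hL in
lemma gapA {y : Gtwo} (hy : y ∈ V) (j : ℤ) :
    sh j y ∈ addElt V v ↔ (sh j y ∈ V ∨ sh j y = v) := by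
  constructor
  · intro h
    rcases mem_addElt.mp h with h | ⟨w, hw, heq⟩
    · exact Or.inl h
    · by_cases hw0 : w = 0
      · subst hw0; rw [zero_add] at heq; exact Or.inr heq
      · exact absurd heq (no_cross hB hB0 hv hL w hw hw0 y hy j)
  · intro h
    rcases h with h | h
    · exact subset_addElt h
    · rw [h]
      exact mem_addElt.mpr (Or.inr ⟨0, hG.1, (zero_add v).symm⟩)

include hG hB hB0 hv hL in
lemma gapC (j : ℤ) :
    sh j v ∈ addElt V v ↔ (sh j v ∈ V ∨ j = 0) := by
  constructor
  · intro h
    rcases mem_addElt.mp h with h | ⟨w, hw, heq⟩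
    · exact Or.inl h
    · by_cases hw0 : w = 0
      · subst hw0; rw [zero_add] at heq
        exact Or.inr (sh_aperiodic hv heq)
      · exfalso
        have hw' : w = sh j v + v := by
          rw [heq]; rw [add_assoc, gtwo_add_self, add_zero]
        by_cases hj : j = 0
        · subst hj; rw [sh_zero, gtwo_add_self] at hw'; exact hw0 hw'
        set M := mx v hv with hM
        have hML := hL M (mx_mem hv)
        rcases lt_or_gt_of_ne hj with hjneg | hjpos
        · -- j < 0, use M - j
          have h1 : w (M - j) ≠ 0 := by
            rw [hw', Finsupp.add_apply, sh_apply, sub_add_cancel]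
            have : v (M - j) = 0 := by
              by_contra hc; have := le_mx hv hc; omega
            simpa [this] using mx_mem hv
          have := hB w hw _ h1
          omega
        · -- j > 0, use M
          have h1 : w M ≠ 0 := by
            rw [hw', Finsupp.add_apply, sh_apply]
            have : v (M + j) = 0 := by
              by_contra hc; have := le_mx hv hc; omega
            simpa [this] using mx_mem hv
          have := hB w hw _ h1
          omega
  · intro h
    rcases h with h | h
    · exact subset_addElt h
    · subst h; rw [sh_zero]
      exact mem_addElt.mpr (Or.inr ⟨0, hG.1, (zero_add v).symm⟩)

include hG hB hB0 hv hL in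
lemma gapB {w : Gtwo} (hw : w ∈ V) (hw0 : w ≠ 0) (j : ℤ) :
    sh j (w + v) ∈ addElt V v ↔ j = 0 := by
  constructor
  · intro h
    rcases mem_addElt.mp h with h | ⟨u, hu, heq⟩
    · exfalso
      have : sh (-j) (sh j (w + v)) = w + v := by
        rw [← sh_add]; simp [sh_zero]
      exact no_cross hB hB0 hv hL w hw hw0 _ h (-j) (by rw [this])
    · by_contra hj
      have key : sh j v + v = sh j w + u := by
        rw [sh_add_apply] at heq
        ext i
        have := congrArg (fun z : Gtwo => z i) heq
        simp only [Finsupp.add_apply] at this ⊢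
        exact char2_rearrange _ _ _ _ this
      set M := mx v hv with hM
      have hML := hL M (mx_mem hv)
      rcases lt_or_gt_of_ne hj with hjneg | hjpos
      · have h1 : (sh j v + v) (M - j) ≠ 0 := by
          rw [Finsupp.add_apply, sh_apply, sub_add_cancel]
          have : v (M - j) = 0 := by
            by_contra hc; have := le_mx hv hc; omega
          simpa [this] using mx_mem hv
        rw [key, Finsupp.add_apply, sh_apply] at h1
        have hu0 : u (M - j) = 0 := by
          by_contra hc; have := hB u hu _ hc; omega
        have hw0' : w (M - j + j) = 0 := by
          by_contra hc; have := hB w hw _ hc; omega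
        rw [hu0, hw0'] at h1; simp at h1
      · have h1 : (sh j v + v) M ≠ 0 := by
          rw [Finsupp.add_apply, sh_apply]
          have : v (M + j) = 0 := by
            by_contra hc; have := le_mx hv hc; omega
          simpa [this] using mx_mem hv
        rw [key, Finsupp.add_apply, sh_apply] at h1
        have hu0 : u M = 0 := by
          by_contra hc; have := hB u hu _ hc; omega
        have hw0' : w (M + j) = 0 := by
          by_contra hc; have := hB w hw _ hc; omega
        rw [hu0, hw0'] at h1; simp at h1
  · intro h
    subst h; rw [sh_zero]
    exact mem_addElt.mpr (Or.inr ⟨w, hw, rfl⟩)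

lemma grp_addElt (hG : SGrp V) : SGrp (addElt V v) := by
  constructor
  · exact subset_addElt hG.1
  · intro x hx y hy
    rcases mem_addElt.mp hx with hx | ⟨w, hw, rfl⟩ <;>
      rcases mem_addElt.mp hy with hy | ⟨u, hu, rfl⟩
    · exact subset_addElt (hG.2 x hx y hy)
    · refine mem_addElt.mpr (Or.inr ⟨x + u, hG.2 x hx u hu, by abel⟩)
    · exact mem_addElt.mpr (Or.inr ⟨w + y, hG.2 w hw y hy, by abel⟩)
    · refine subset_addElt ?_
      have h2 : w + v + (u + v) = w + u := by
        ext i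
        simp only [Finsupp.add_apply]
        exact char2_sum _ _ _
      rw [h2]
      exact hG.2 w hw u hu

lemma bdd_addElt {B' : ℤ} (hB : Bdd V B) (hBB : B ≤ B')
    (hU : ∀ i, v i ≠ 0 → 0 ≤ i ∧ i ≤ B') : Bdd (addElt V v) B' := by
  intro x hx i hi
  rcases mem_addElt.mp hx with hx | ⟨w, hw, rfl⟩
  · have := hB x hx i hi; omega
  · rw [Finsupp.add_apply] at hi
    have : w i ≠ 0 ∨ v i ≠ 0 := by
      by_contra hc; push_neg at hc
      rw [hc.1, hc.2] at hi; simp at hi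
    rcases this with h | h
    · have := hB w hw i h; omega
    · exact hU i h

end Gap

end

noncomputable section
open Classical
attribute [local instance] Classical.propDecidable

def ISet (W : Set Gtwo) (y : Gtwo) : Set ℤ := {j | sh j y ∈ W}

lemma ISet_mono {W W' : Set Gtwo} (h : W ⊆ W') (y : Gtwo) : ISet W y ⊆ ISet W' y :=
  fun _ hj => h hj

lemma ISet_finite {V : Finset Gtwo} {B : ℤ} (hB : Bdd V B) {y : Gtwo} (hy : y ≠ 0) :
    (ISet ↑V y).Finite := by
  obtain ⟨i, hi⟩ := exists_ne_zero hy
  apply Set.Finite.subset (Set.finite_Icc (i - B) i)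
  intro j hj
  have hmem : sh j y ∈ V := hj
  have : sh j y (i - j) ≠ 0 := by rw [sh_apply, sub_add_cancel]; exact hi
  have := hB _ hmem _ this
  simp only [Set.mem_Icc]
  omega

def Tck (q : List Gtwo) (y : Gtwo) : ℕ := q.countP (fun t => decide (R t y))

lemma Tck_append (q q' : List Gtwo) (y : Gtwo) : Tck (q ++ q') y = Tck q y + Tck q' y :=
  List.countP_append

lemma Tck_nil (y : Gtwo) : Tck [] y = 0 := by simp [Tck]

lemma Tck_cons (t : Gtwo) (q : List Gtwo) (y : Gtwo) :
    Tck (t :: q) y = Tck q y + (if R t y then 1 else 0) := by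
  simp only [Tck, List.countP_cons]
  by_cases h : R t y <;> simp [h]

lemma Tck_eq_zero {q : List Gtwo} {y : Gtwo} (h : ∀ t ∈ q, ¬ R t y) : Tck q y = 0 := by
  apply List.countP_eq_zero.mpr
  intro t ht
  simpa using h t ht

lemma Tck_le_of_sublist {q q' : List Gtwo} (h : q.Sublist q') (y : Gtwo) :
    Tck q y ≤ Tck q' y := h.countP_le

lemma Tck_replicate (m : ℕ) (t y : Gtwo) :
    Tck (List.replicate m t) y = if R t y then m else 0 := by
  induction m with
  | zero => simp [Tck]
  | succ m ih =>
      rw [List.replicate_succ, Tck_cons, ih]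
      by_cases h : R t y <;> simp [h]

lemma Tck_flatMap (l : List Gtwo) (g : Gtwo → Gtwo) (m : ℕ) (y : Gtwo) :
    Tck (l.flatMap (fun w => List.replicate m (g w))) y
      = m * (l.countP (fun w => decide (R (g w) y))) := by
  induction l with
  | nil => simp [Tck]
  | cons a l ih =>
      rw [List.flatMap_cons, Tck_append, ih, Tck_replicate, List.countP_cons]
      by_cases h : R (g a) y <;> simp [h] <;> ring

/-- the seed element of width B+1 placed at 2B+1 -/
def seed (B : ℤ) : Gtwo := Finsupp.single (2*B+1) 1 + Finsupp.single (3*B+2) 1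

lemma seed_apply (B : ℤ) (hB0 : 0 ≤ B) (i : ℤ) :
    seed B i ≠ 0 ↔ (i = 2*B+1 ∨ i = 3*B+2) := by
  simp only [seed, Finsupp.add_apply, Finsupp.single_apply]
  by_cases h1 : 2*B+1 = i <;> by_cases h2 : 3*B+2 = i
  · omega
  · simp only [if_pos h1, if_neg h2]; constructor
    · intro _; left; omega
    · intro _; norm_num
  · simp only [if_neg h1, if_pos h2]; constructor
    · intro _; right; omega
    · intro _; norm_num
  · simp only [if_neg h1, if_neg h2]; constructor
    · intro h; simp at h
    · intro h; omega

lemma seed_ne_zero (B : ℤ) (hB0 : 0 ≤ B) : seed B ≠ 0 := by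
  intro h
  have : seed B (2*B+1) ≠ 0 := (seed_apply B hB0 _).mpr (Or.inl rfl)
  rw [h] at this; simp at this

lemma seed_not_shift {V : Finset Gtwo} {B : ℤ} (hB : Bdd V B) (hB0 : 0 ≤ B) :
    ∀ y ∈ V, ∀ j, sh j y ≠ seed B := by
  intro y hy j h
  have h1 : sh j y (2*B+1) ≠ 0 := by rw [h]; exact (seed_apply B hB0 _).mpr (Or.inl rfl)
  have h2 : sh j y (3*B+2) ≠ 0 := by rw [h]; exact (seed_apply B hB0 _).mpr (Or.inr rfl)
  rw [sh_apply] at h1 h2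
  have b1 := hB y hy _ h1
  have b2 := hB y hy _ h2
  omega

end

noncomputable section
open Classical
attribute [local instance] Classical.propDecidable

lemma char2_cancel (a b : ZMod 2) : a + (a + b) = b := by revert a b; decide

lemma char2_zero {a b : ZMod 2} (h : a + b = 0) : a = b := by revert a b; decide

lemma gtwo_add_eq_zero {x y : Gtwo} : x + y = 0 ↔ x = y := by
  constructor
  · intro h
    ext i
    have := congrArg (fun z : Gtwo => z i) h
    simp only [Finsupp.add_apply, Finsupp.coe_zero, Pi.zero_apply] at this
    exact char2_zero this
  · intro h; subst h; exact gtwo_add_self x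

lemma R_sh_iff (a x : Gtwo) (j : ℤ) : R a (sh j x) ↔ R a x :=
  ⟨fun h => R_trans h (R_symm (R_sh j x)), fun h => R_trans h (R_sh j x)⟩

lemma Tck_congr {a b : Gtwo} (h : R a b) (l : List Gtwo) : Tck l a = Tck l b := by
  apply List.countP_congr
  intro t _
  simp only [decide_eq_true_eq]
  exact ⟨fun h' => R_trans h' h, fun h' => R_trans h' (R_symm h)⟩

lemma countP_eq_one {l : List Gtwo} (hl : l.Nodup) {w₀ : Gtwo} (hw : w₀ ∈ l)
    {p : Gtwo → Prop} (hp : ∀ w ∈ l, p w ↔ w = w₀) :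
    l.countP (fun w => decide (p w)) = 1 := by
  induction l with
  | nil => simp at hw
  | cons a l ih =>
      rw [List.countP_cons]
      have hnd := List.nodup_cons.mp hl
      by_cases hcase : a = w₀
      · subst hcase
        have h1 : p a := (hp a (List.mem_cons_self)).mpr rfl
        have h2 : l.countP (fun w => decide (p w)) = 0 := by
          apply List.countP_eq_zero.mpr
          intro t ht
          have hnp : ¬ p t := by
            intro hpt
            have heq := (hp t (List.mem_cons_of_mem _ ht)).mp hpt
            rw [heq] at ht
            exact hnd.1 ht
          simpa using hnp
        simp [h1, h2]
      · have hw' : w₀ ∈ l := by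
          rcases List.mem_cons.mp hw with h | h
          · exact absurd h.symm hcase
          · exact h
        have ha : ¬ p a := by
          intro hpa
          exact hcase ((hp a (List.mem_cons_self)).mp hpa)
        have hrec := ih hnd.2 hw' (fun w hwl => hp w (List.mem_cons_of_mem _ hwl))
        simp [ha, hrec]

structure St where
  V : Finset Gtwo
  B : ℤ
  tau : Gtwo → ℕ
  q : List Gtwo

variable (E : Set ℕ) (n₀ : ℕ)

def tgt (k : ℕ) : ℕ := if k ∈ E then k else n₀

def stepSeed (k : ℕ) (S : St) : St :=
  { V := addElt S.V (seed S.B)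
    B := 3*S.B+2
    tau := fun x => if ∃ w ∈ S.V, R (w + seed S.B) x then tgt E n₀ k else S.tau x
    q := S.q ++ (S.V.toList.flatMap
      (fun w => List.replicate (tgt E n₀ k - 1) (w + seed S.B))) }

def stepServe (k : ℕ) (S : St) : St :=
  match S.q with
  | [] => S
  | t :: rest =>
    { V := addElt S.V (sh (-(2*S.B+1)) t)
      B := 3*S.B+2
      tau := fun x => if ∃ w ∈ S.V, w ≠ 0 ∧ R (w + sh (-(2*S.B+1)) t) x
        then tgt E n₀ k else S.tau x
      q := rest ++ ((S.V.toList.filter (fun w => decide (w ≠ 0))).flatMap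
        (fun w => List.replicate (tgt E n₀ k - 1) (w + sh (-(2*S.B+1)) t))) }

def stepFull (k : ℕ) (S : St) : St := stepServe E n₀ k (stepSeed E n₀ k S)

def stage : ℕ → St
  | 0 => ⟨{0}, 0, fun _ => n₀, []⟩
  | k+1 => stepFull E n₀ k (stage k)

structure InvSt (S : St) : Prop where
  grp : SGrp S.V
  bpos : 0 ≤ S.B
  bdd : Bdd S.V S.B
  tauE : ∀ x, S.tau x ∈ E
  tauInv : ∀ x j, S.tau (sh j x) = S.tau x
  qmem : ∀ t ∈ S.q, t ∈ S.V ∧ t ≠ 0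
  cnt : ∀ y ∈ S.V, y ≠ 0 → (ISet ↑S.V y).ncard + Tck S.q y = S.tau y

variable (hn₀ : n₀ ∈ E) (hpos : ∀ n ∈ E, 0 < n)

include hn₀ in
lemma tgt_mem (k : ℕ) : tgt E n₀ k ∈ E := by
  rw [tgt]; split <;> assumption

include hn₀ hpos in
lemma tgt_pos (k : ℕ) : 0 < tgt E n₀ k := hpos _ (tgt_mem E n₀ hn₀ k)

include hn₀ in
lemma inv_init : InvSt E (stage E n₀ 0) := by
  refine ⟨⟨Finset.mem_singleton_self 0, ?_⟩, ?_, ?_, ?_, ?_, ?_, ?_⟩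
  · intro x hx y hy
    rw [show (stage E n₀ 0).V = {0} from rfl, Finset.mem_singleton] at hx hy
    subst hx; subst hy
    rw [show (stage E n₀ 0).V = {0} from rfl]
    simp
  · norm_num [stage]
  · intro x hx i hi
    rw [show (stage E n₀ 0).V = {0} from rfl, Finset.mem_singleton] at hx
    subst hx; simp at hi
  · intro x; exact hn₀
  · intro x j; rfl
  · intro t ht; simp [stage] at ht
  · intro y hy hy0
    rw [show (stage E n₀ 0).V = {0} from rfl, Finset.mem_singleton] at hy
    exact absurd hy hy0

end

noncomputable section
open Classical
attribute [local instance] Classical.propDecidable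

lemma gtwo_cancel (w z : Gtwo) : w + (w + z) = z := by
  ext i
  simp only [Finsupp.add_apply]
  exact char2_cancel _ _

variable (E : Set ℕ) (n₀ : ℕ) (hn₀ : n₀ ∈ E) (hpos : ∀ n ∈ E, 0 < n)

include hn₀ hpos in
lemma seed_step (k : ℕ) {S : St} (hS : InvSt E S) :
    InvSt E (stepSeed E n₀ k S) ∧
    S.V ⊆ (stepSeed E n₀ k S).V ∧
    (∀ x, (∃ y ∈ S.V, y ≠ 0 ∧ R y x) → (stepSeed E n₀ k S).tau x = S.tau x) ∧
    (∃ r, (stepSeed E n₀ k S).q = S.q ++ r ∧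
        ∀ t ∈ r, ∀ y ∈ S.V, y ≠ 0 → ¬ R t y) ∧
    (seed S.B ∈ (stepSeed E n₀ k S).V ∧ seed S.B ≠ 0 ∧
        (stepSeed E n₀ k S).tau (seed S.B) = tgt E n₀ k) := by
  set s := seed S.B with hs
  set n := tgt E n₀ k with hn
  set V' : Finset Gtwo := addElt S.V s with hV'
  set newT : List Gtwo := S.V.toList.flatMap
      (fun w => List.replicate (n - 1) (w + s)) with hnewT
  have hVeq : (stepSeed E n₀ k S).V = V' := rfl
  have hqeq : (stepSeed E n₀ k S).q = S.q ++ newT := rfl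
  have htaueq : (stepSeed E n₀ k S).tau
      = fun x => if ∃ w ∈ S.V, R (w + s) x then n else S.tau x := rfl
  have hBeq : (stepSeed E n₀ k S).B = 3*S.B+2 := rfl
  have hnpos : 0 < n := tgt_pos E n₀ hn₀ hpos k
  have hv : s ≠ 0 := seed_ne_zero S.B hS.bpos
  have hL : ∀ i, s i ≠ 0 → 2*S.B+1 ≤ i := by
    intro i hi
    have hB0 := hS.bpos
    rcases (seed_apply S.B hS.bpos i).mp hi with h | h <;> omega
  have hU : ∀ i, s i ≠ 0 → 0 ≤ i ∧ i ≤ 3*S.B+2 := by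
    intro i hi
    have hB0 := hS.bpos
    rcases (seed_apply S.B hS.bpos i).mp hi with h | h <;> omega
  have hshift : ∀ y ∈ S.V, ∀ j, sh j y ≠ s := seed_not_shift hS.bdd hS.bpos
  have hsnotV : s ∉ S.V := v_not_mem hS.bdd hS.bpos hv hL
  have hDnew : ∀ w ∈ S.V, ∀ j, (sh j (w + s) ∈ V' ↔ j = 0) := by
    intro w hw j
    by_cases hw0 : w = 0
    · subst hw0
      rw [zero_add]
      constructor
      · intro h
        rcases (gapC hS.grp hS.bdd hS.bpos hv hL j).mp h with h | h
        · exfalso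
          apply hshift (sh j s) h (-j)
          rw [← sh_add]; simp [sh_zero]
        · exact h
      · intro h; subst h; rw [sh_zero]
        exact mem_addElt.mpr (Or.inr ⟨0, hS.grp.1, (zero_add s).symm⟩)
    · exact gapB hS.grp hS.bdd hS.bpos hv hL hw hw0 j
  have hnotmemN : ∀ w ∈ S.V, w + s ∉ S.V := by
    intro w hw hmem
    exact hsnotV (by rw [← gtwo_cancel w s]; exact hS.grp.2 w hw _ hmem)
  have hfreshN : ∀ w ∈ S.V, ∀ y ∈ S.V, y ≠ 0 → ¬ R (w + s) y := by
    intro w hw y hy hy0 ⟨j, hj⟩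
    have : sh j (w + s) ∈ V' := by rw [hj]; exact subset_addElt hy
    have hj0 := (hDnew w hw j).mp this
    subst hj0
    rw [sh_zero] at hj
    exact hnotmemN w hw (hj ▸ hy)
  have hRuniq : ∀ w ∈ S.V, ∀ w' ∈ S.V, R (w + s) (w' + s) → w = w' := by
    intro w hw w' hw' ⟨j, hj⟩
    have : sh j (w + s) ∈ V' := by
      rw [hj]; exact mem_addElt.mpr (Or.inr ⟨w', hw', rfl⟩)
    have hj0 := (hDnew w hw j).mp this
    subst hj0
    rw [sh_zero] at hj
    exact add_right_cancel hj
  have hnzN : ∀ w ∈ S.V, w + s ≠ 0 := by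
    intro w hw h
    rw [gtwo_add_eq_zero] at h
    rw [← h] at hsnotV
    exact hsnotV hw
  have hIold : ∀ y ∈ S.V, y ≠ 0 → ISet ↑V' y = ISet ↑S.V y := by
    intro y hy hy0
    ext j
    simp only [ISet, Set.mem_setOf_eq, Finset.coe_mem, Finset.mem_coe]
    constructor
    · intro h
      rcases (gapA hS.grp hS.bdd hS.bpos hv hL hy j).mp h with h | h
      · exact h
      · exact absurd h (hshift y hy j)
    · intro h; exact subset_addElt h
  have hInew : ∀ w ∈ S.V, ISet ↑V' (w + s) = {0} := by
    intro w hw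
    ext j
    simp only [ISet, Set.mem_setOf_eq, Set.mem_singleton_iff, Finset.mem_coe]
    exact hDnew w hw j
  have hmemN : ∀ t ∈ newT, ∃ w ∈ S.V, t = w + s := by
    intro t ht
    rw [hnewT, List.mem_flatMap] at ht
    obtain ⟨w, hw, ht⟩ := ht
    exact ⟨w, (Finset.mem_toList).mp hw, List.eq_of_mem_replicate ht⟩
  have hTnewOld : ∀ y ∈ S.V, y ≠ 0 → Tck newT y = 0 := by
    intro y hy hy0
    apply Tck_eq_zero
    intro t ht
    obtain ⟨w, hw, rfl⟩ := hmemN t ht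
    exact hfreshN w hw y hy hy0
  have hTnewNew : ∀ w₀ ∈ S.V, Tck newT (w₀ + s) = n - 1 := by
    intro w₀ hw₀
    rw [hnewT, Tck_flatMap]
    rw [countP_eq_one (Finset.nodup_toList S.V) ((Finset.mem_toList).mpr hw₀)]
    · ring
    · intro w hw
      constructor
      · intro h; exact hRuniq w ((Finset.mem_toList).mp hw) w₀ hw₀ h
      · intro h; subst h; exact R_refl _
  have hTauOld : ∀ x, (∃ y ∈ S.V, y ≠ 0 ∧ R y x) →
      (stepSeed E n₀ k S).tau x = S.tau x := by
    intro x ⟨y, hy, hy0, hR⟩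
    rw [htaueq]
    simp only
    rw [if_neg]
    rintro ⟨w, hw, hRw⟩
    exact hfreshN w hw y hy hy0 (R_trans hRw (R_symm hR))
  have hTauNew : ∀ w₀ ∈ S.V, (stepSeed E n₀ k S).tau (w₀ + s) = n := by
    intro w₀ hw₀
    rw [htaueq]
    simp only
    rw [if_pos ⟨w₀, hw₀, R_refl _⟩]
  refine ⟨⟨grp_addElt hS.grp, ?_, ?_, ?_, ?_, ?_, ?_⟩, ?_, hTauOld, ?_, ?_⟩
  · rw [hBeq]; have := hS.bpos; omega
  · rw [hVeq, hBeq]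
    exact bdd_addElt hS.bdd (by have := hS.bpos; omega) hU
  · intro x
    rw [htaueq]; simp only
    split
    · exact tgt_mem E n₀ hn₀ k
    · exact hS.tauE x
  · intro x j
    rw [htaueq]; simp only
    have hcond : (∃ w ∈ S.V, R (w + s) (sh j x)) ↔ (∃ w ∈ S.V, R (w + s) x) := by
      constructor
      · rintro ⟨w, hw, hR⟩; exact ⟨w, hw, (R_sh_iff _ _ _).mp hR⟩
      · rintro ⟨w, hw, hR⟩; exact ⟨w, hw, (R_sh_iff _ _ _).mpr hR⟩
    by_cases h : ∃ w ∈ S.V, R (w + s) x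
    · rw [if_pos h, if_pos (hcond.mpr h)]
    · rw [if_neg h, if_neg (fun hc => h (hcond.mp hc)), hS.tauInv]
  · intro t ht
    rw [hqeq, List.mem_append] at ht
    rcases ht with ht | ht
    · obtain ⟨h1, h2⟩ := hS.qmem t ht
      exact ⟨subset_addElt h1, h2⟩
    · obtain ⟨w, hw, rfl⟩ := hmemN t ht
      exact ⟨mem_addElt.mpr (Or.inr ⟨w, hw, rfl⟩), hnzN w hw⟩
  · intro y hy hy0
    rw [hVeq] at hy
    rcases mem_addElt.mp hy with hy | ⟨w₀, hw₀, rfl⟩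
    · rw [hVeq, hqeq, hIold y hy hy0, Tck_append, hTnewOld y hy hy0,
        hTauOld y ⟨y, hy, hy0, R_refl _⟩, add_zero]
      exact hS.cnt y hy hy0
    · rw [hVeq, hqeq, hInew w₀ hw₀, Tck_append, hTnewNew w₀ hw₀,
        hTauNew w₀ hw₀]
      have hTold : Tck S.q (w₀ + s) = 0 := by
        apply Tck_eq_zero
        intro t ht
        obtain ⟨h1, h2⟩ := hS.qmem t ht
        intro hR
        exact hfreshN w₀ hw₀ t h1 h2 (R_symm hR)
      rw [hTold, Set.ncard_singleton]
      omega
  · rw [hVeq]; exact subset_addElt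
  · refine ⟨newT, hqeq, ?_⟩
    intro t ht y hy hy0
    obtain ⟨w, hw, rfl⟩ := hmemN t ht
    exact hfreshN w hw y hy hy0
  · refine ⟨?_, hv, ?_⟩
    · rw [hVeq]
      exact mem_addElt.mpr (Or.inr ⟨0, hS.grp.1, (zero_add s).symm⟩)
    · have := hTauNew 0 hS.grp.1
      rwa [zero_add] at this

end

noncomputable section
open Classical
attribute [local instance] Classical.propDecidable

variable (E : Set ℕ) (n₀ : ℕ) (hn₀ : n₀ ∈ E) (hpos : ∀ n ∈ E, 0 < n)

include hn₀ hpos in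
lemma serve_step (k : ℕ) {S : St} (hS : InvSt E S) :
    InvSt E (stepServe E n₀ k S) ∧
    S.V ⊆ (stepServe E n₀ k S).V ∧
    (∀ x, (∃ y ∈ S.V, y ≠ 0 ∧ R y x) → (stepServe E n₀ k S).tau x = S.tau x) ∧
    (∃ r, (stepServe E n₀ k S).q = S.q.tail ++ r ∧
        ∀ t ∈ r, ∀ y ∈ S.V, y ≠ 0 → ¬ R t y) := by
  rcases hq : S.q with _ | ⟨t, rest⟩
  · have hstep : stepServe E n₀ k S = S := by
      rw [stepServe, hq]
    rw [hstep, hq]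
    exact ⟨hS, Finset.Subset.refl _, fun x _ => rfl,
      ⟨[], by simp, fun t ht => absurd ht List.not_mem_nil⟩⟩
  · obtain ⟨htV, ht0⟩ := hS.qmem t (hq ▸ List.mem_cons_self)
    set e : ℤ := 2*S.B+1 with he
    set v : Gtwo := sh (-e) t with hv'
    set n := tgt E n₀ k with hn
    set V' : Finset Gtwo := addElt S.V v with hV'
    set newT : List Gtwo := (S.V.toList.filter (fun w => decide (w ≠ 0))).flatMap
        (fun w => List.replicate (n - 1) (w + v)) with hnewT
    have hVeq : (stepServe E n₀ k S).V = V' := by rw [stepServe, hq]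
    have hqeq : (stepServe E n₀ k S).q = rest ++ newT := by rw [stepServe, hq]
    have htaueq : (stepServe E n₀ k S).tau
        = fun x => if ∃ w ∈ S.V, w ≠ 0 ∧ R (w + v) x then n else S.tau x := by
      rw [stepServe, hq]
    have hBeq : (stepServe E n₀ k S).B = 3*S.B+2 := by rw [stepServe, hq]
    have hnpos : 0 < n := tgt_pos E n₀ hn₀ hpos k
    have hB0 := hS.bpos
    have hv : v ≠ 0 := fun h => ht0 ((sh_eq_zero_iff _ _).mp h)
    have hL : ∀ i, v i ≠ 0 → 2*S.B+1 ≤ i := by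
      intro i hi
      rw [hv', sh_apply] at hi
      have := hS.bdd t htV _ hi
      omega
    have hU : ∀ i, v i ≠ 0 → 0 ≤ i ∧ i ≤ 3*S.B+2 := by
      intro i hi
      rw [hv', sh_apply] at hi
      have := hS.bdd t htV _ hi
      omega
    have hvnotV : v ∉ S.V := v_not_mem hS.bdd hS.bpos hv hL
    have hRtv : R t v := ⟨-e, rfl⟩
    have hDnew : ∀ w ∈ S.V, w ≠ 0 → ∀ j, (sh j (w + v) ∈ V' ↔ j = 0) :=
      fun w hw hw0 j => gapB hS.grp hS.bdd hS.bpos hv hL hw hw0 j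
    have hnotmemN : ∀ w ∈ S.V, w + v ∉ S.V := by
      intro w hw hmem
      exact hvnotV (by rw [← gtwo_cancel w v]; exact hS.grp.2 w hw _ hmem)
    have hfreshN : ∀ w ∈ S.V, w ≠ 0 → ∀ y ∈ S.V, y ≠ 0 → ¬ R (w + v) y := by
      intro w hw hw0 y hy hy0 ⟨j, hj⟩
      have : sh j (w + v) ∈ V' := by rw [hj]; exact subset_addElt hy
      have hj0 := (hDnew w hw hw0 j).mp this
      subst hj0
      rw [sh_zero] at hj
      exact hnotmemN w hw (hj ▸ hy)
    have hRuniq : ∀ w ∈ S.V, w ≠ 0 → ∀ w' ∈ S.V, R (w + v) (w' + v) → w = w' := by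
      intro w hw hw0 w' hw' ⟨j, hj⟩
      have : sh j (w + v) ∈ V' := by
        rw [hj]; exact mem_addElt.mpr (Or.inr ⟨w', hw', rfl⟩)
      have hj0 := (hDnew w hw hw0 j).mp this
      subst hj0
      rw [sh_zero] at hj
      exact add_right_cancel hj
    have hnzN : ∀ w ∈ S.V, w + v ≠ 0 := by
      intro w hw h
      rw [gtwo_add_eq_zero] at h
      rw [← h] at hvnotV
      exact hvnotV hw
    have hmemN : ∀ t' ∈ newT, ∃ w ∈ S.V, w ≠ 0 ∧ t' = w + v := by
      intro t' ht'
      rw [hnewT, List.mem_flatMap] at ht'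
      obtain ⟨w, hw, ht'⟩ := ht'
      rw [List.mem_filter] at hw
      refine ⟨w, (Finset.mem_toList).mp hw.1, of_decide_eq_true hw.2,
        List.eq_of_mem_replicate ht'⟩
    have hTnewOld : ∀ y ∈ S.V, y ≠ 0 → Tck newT y = 0 := by
      intro y hy hy0
      apply Tck_eq_zero
      intro t' ht'
      obtain ⟨w, hw, hw0, rfl⟩ := hmemN t' ht'
      exact hfreshN w hw hw0 y hy hy0
    have hTnewNew : ∀ w₀ ∈ S.V, w₀ ≠ 0 → Tck newT (w₀ + v) = n - 1 := by
      intro w₀ hw₀ hw₀0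
      rw [hnewT, Tck_flatMap]
      rw [countP_eq_one ((Finset.nodup_toList S.V).filter _)
        (List.mem_filter.mpr ⟨(Finset.mem_toList).mpr hw₀, decide_eq_true hw₀0⟩)]
      · ring
      · intro w hw
        rw [List.mem_filter] at hw
        constructor
        · intro h
          exact hRuniq w ((Finset.mem_toList).mp hw.1) (of_decide_eq_true hw.2) w₀ hw₀ h
        · intro h; subst h; exact R_refl _
    have hTnewV : Tck newT v = 0 := by
      apply Tck_eq_zero
      intro t' ht'
      obtain ⟨w, hw, hw0, rfl⟩ := hmemN t' ht'
      intro ⟨j, hj⟩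
      have : sh j (w + v) ∈ V' := by
        rw [hj]; exact mem_addElt.mpr (Or.inr ⟨0, hS.grp.1, (zero_add v).symm⟩)
      have hj0 := (hDnew w hw hw0 j).mp this
      subst hj0
      rw [sh_zero] at hj
      exact hw0 (add_right_cancel (hj.trans (zero_add v).symm))
    have hrestq : ∀ t' ∈ rest, t' ∈ S.V ∧ t' ≠ 0 := by
      intro t' ht'
      exact hS.qmem t' (hq ▸ List.mem_cons_of_mem t ht')
    have hTauOld : ∀ x, (∃ y ∈ S.V, y ≠ 0 ∧ R y x) →
        (stepServe E n₀ k S).tau x = S.tau x := by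
      intro x ⟨y, hy, hy0, hR⟩
      rw [htaueq]
      simp only
      rw [if_neg]
      rintro ⟨w, hw, hw0, hRw⟩
      exact hfreshN w hw hw0 y hy hy0 (R_trans hRw (R_symm hR))
    have hTauNew : ∀ w₀ ∈ S.V, w₀ ≠ 0 → (stepServe E n₀ k S).tau (w₀ + v) = n := by
      intro w₀ hw₀ hw₀0
      rw [htaueq]
      simp only
      rw [if_pos ⟨w₀, hw₀, hw₀0, R_refl _⟩]
    have hTauV : (stepServe E n₀ k S).tau v = S.tau t := by
      rw [htaueq]
      simp only
      rw [if_neg]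
      · rw [hv', hS.tauInv]
      · rintro ⟨w, hw, hw0, j, hj⟩
        have : sh j (w + v) ∈ V' := by
          rw [hj]; exact mem_addElt.mpr (Or.inr ⟨0, hS.grp.1, (zero_add v).symm⟩)
        have hj0 := (hDnew w hw hw0 j).mp this
        subst hj0
        rw [sh_zero] at hj
        exact hw0 (add_right_cancel (hj.trans (zero_add v).symm))
    refine ⟨⟨?_, ?_, ?_, ?_, ?_, ?_, ?_⟩, ?_, hTauOld, ?_⟩
    · rw [hVeq]; exact grp_addElt hS.grp
    · rw [hBeq]; omega
    · rw [hVeq, hBeq]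
      exact bdd_addElt hS.bdd (by omega) hU
    · intro x
      rw [htaueq]; simp only
      split
      · exact tgt_mem E n₀ hn₀ k
      · exact hS.tauE x
    · intro x j
      rw [htaueq]; simp only
      have hcond : (∃ w ∈ S.V, w ≠ 0 ∧ R (w + v) (sh j x))
          ↔ (∃ w ∈ S.V, w ≠ 0 ∧ R (w + v) x) := by
        constructor
        · rintro ⟨w, hw, hw0, hR⟩; exact ⟨w, hw, hw0, (R_sh_iff _ _ _).mp hR⟩
        · rintro ⟨w, hw, hw0, hR⟩; exact ⟨w, hw, hw0, (R_sh_iff _ _ _).mpr hR⟩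
      by_cases h : ∃ w ∈ S.V, w ≠ 0 ∧ R (w + v) x
      · rw [if_pos h, if_pos (hcond.mpr h)]
      · rw [if_neg h, if_neg (fun hc => h (hcond.mp hc)), hS.tauInv]
    · intro t' ht'
      rw [hqeq, List.mem_append] at ht'
      rw [hVeq]
      rcases ht' with ht' | ht'
      · obtain ⟨h1, h2⟩ := hrestq t' ht'
        exact ⟨subset_addElt h1, h2⟩
      · obtain ⟨w, hw, hw0, rfl⟩ := hmemN t' ht'
        exact ⟨mem_addElt.mpr (Or.inr ⟨w, hw, rfl⟩), hnzN w hw⟩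
    · -- the count equation
      intro y hy hy0
      rw [hVeq] at hy
      rcases mem_addElt.mp hy with hy | ⟨w₀, hw₀, rfl⟩
      · -- old element
        have hcnt := hS.cnt y hy hy0
        rw [hq, Tck_cons] at hcnt
        by_cases hRy : R t y
        · obtain ⟨j₀, hj₀⟩ : R y v := R_trans (R_symm hRy) hRtv
          have hIeq : ISet ↑V' y = insert j₀ (ISet ↑S.V y) := by
            ext j
            simp only [ISet, Set.mem_setOf_eq, Set.mem_insert_iff, Finset.mem_coe]
            constructor
            · intro h
              rcases (gapA hS.grp hS.bdd hS.bpos hv hL hy j).mp h with h | h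
              · exact Or.inr h
              · exact Or.inl (R_unique hy0 (h.trans hj₀.symm))
            · intro h
              rcases h with h | h
              · subst h; rw [hj₀]
                exact mem_addElt.mpr (Or.inr ⟨0, hS.grp.1, (zero_add v).symm⟩)
              · exact subset_addElt h
          have hnotin : j₀ ∉ ISet ↑S.V y := by
            intro hmem
            have : sh j₀ y ∈ S.V := hmem
            rw [hj₀] at this
            exact hvnotV this
          rw [hVeq, hqeq, hIeq, Tck_append, hTnewOld y hy hy0,
            hTauOld y ⟨y, hy, hy0, R_refl _⟩,
            Set.ncard_insert_of_notMem hnotin (ISet_finite hS.bdd hy0)]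
          rw [if_pos hRy] at hcnt
          omega
        · have hIeq : ISet ↑V' y = ISet ↑S.V y := by
            ext j
            simp only [ISet, Set.mem_setOf_eq, Finset.mem_coe]
            constructor
            · intro h
              rcases (gapA hS.grp hS.bdd hS.bpos hv hL hy j).mp h with h | h
              · exact h
              · exfalso
                apply hRy
                exact R_symm (R_trans ⟨j, h⟩ (R_symm hRtv))
            · intro h; exact subset_addElt h
          rw [hVeq, hqeq, hIeq, Tck_append, hTnewOld y hy hy0,
            hTauOld y ⟨y, hy, hy0, R_refl _⟩]
          rw [if_neg hRy] at hcnt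
          omega
      · by_cases hw₀0 : w₀ = 0
        · -- y = v : joins the class of t
          subst hw₀0
          rw [zero_add] at hy0 ⊢
          have hcnt := hS.cnt t htV ht0
          rw [hq, Tck_cons, if_pos (R_refl t)] at hcnt
          have hIeq : ISet ↑V' v = insert 0 ((fun z => z + e) '' (ISet ↑S.V t)) := by
            ext j
            simp only [ISet, Set.mem_setOf_eq, Set.mem_insert_iff, Set.mem_image,
              Finset.mem_coe]
            constructor
            · intro h
              rcases (gapC hS.grp hS.bdd hS.bpos hv hL j).mp h with h | h
              · right
                refine ⟨j - e, ?_, by simp⟩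
                have heqq : sh (j - e) t = sh j v := by
                  rw [hv', ← sh_add, sub_eq_add_neg]
                rw [heqq]
                exact h
              · exact Or.inl h
            · intro h
              rcases h with h | ⟨z, hz, hzj⟩
              · subst h; rw [sh_zero]
                exact mem_addElt.mpr (Or.inr ⟨0, hS.grp.1, (zero_add v).symm⟩)
              · have hzj' : z + e = j := hzj
                have heqq : sh j v = sh z t := by
                  rw [hv', ← sh_add]
                  congr 1
                  omega
                rw [heqq]
                exact subset_addElt hz
          have h0notin : (0:ℤ) ∉ (fun z => z + e) '' (ISet ↑S.V t) := by
            rintro ⟨z, hz, hze⟩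
            have hze2 : z + e = 0 := hze
            have hze' : z = -e := by omega
            subst hze'
            exact hvnotV hz
          have himgcard : ((fun z => z + e) '' (ISet ↑S.V t)).ncard
              = (ISet ↑S.V t).ncard :=
            Set.ncard_image_of_injective _ (fun a b h => by omega)
          have himgfin : ((fun z => z + e) '' (ISet ↑S.V t)).Finite :=
            (ISet_finite hS.bdd ht0).image _
          rw [hVeq, hqeq, hIeq, Tck_append, hTnewV,
            Set.ncard_insert_of_notMem h0notin himgfin, himgcard, hTauV,
            Tck_congr (R_symm hRtv) rest]
          omega
        · -- genuinely new class
          rw [hVeq, hqeq, Tck_append, hTnewNew w₀ hw₀ hw₀0, hTauNew w₀ hw₀ hw₀0]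
          have hIeq : ISet ↑V' (w₀ + v) = {0} := by
            ext j
            simp only [ISet, Set.mem_setOf_eq, Set.mem_singleton_iff, Finset.mem_coe]
            exact hDnew w₀ hw₀ hw₀0 j
          have hTold : Tck rest (w₀ + v) = 0 := by
            apply Tck_eq_zero
            intro t' ht'
            obtain ⟨h1, h2⟩ := hrestq t' ht'
            intro hR
            exact hfreshN w₀ hw₀ hw₀0 t' h1 h2 (R_symm hR)
          rw [hIeq, hTold, Set.ncard_singleton]
          omega
    · rw [hVeq]; exact subset_addElt
    · refine ⟨newT, by rw [hqeq, List.tail_cons], ?_⟩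
      intro t' ht' y hy hy0
      obtain ⟨w, hw, hw0, rfl⟩ := hmemN t' ht'
      exact hfreshN w hw hw0 y hy hy0

end

noncomputable section
open Classical
attribute [local instance] Classical.propDecidable

variable (E : Set ℕ) (n₀ : ℕ) (hn₀ : n₀ ∈ E) (hpos : ∀ n ∈ E, 0 < n)

include hn₀ hpos in
lemma full_step (k : ℕ) {S : St} (hS : InvSt E S) :
    InvSt E (stepFull E n₀ k S) ∧
    S.V ⊆ (stepFull E n₀ k S).V ∧
    (∀ x, (∃ y ∈ S.V, y ≠ 0 ∧ R y x) → (stepFull E n₀ k S).tau x = S.tau x) ∧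
    (∃ r, (stepFull E n₀ k S).q = S.q.tail ++ r ∧
        ∀ t ∈ r, ∀ y ∈ S.V, y ≠ 0 → ¬ R t y) ∧
    (seed S.B ∈ (stepFull E n₀ k S).V ∧ seed S.B ≠ 0 ∧
        (stepFull E n₀ k S).tau (seed S.B) = tgt E n₀ k) := by
  obtain ⟨hI1, hsub1, hstab1, ⟨r₁, hq1, hfr1⟩, hsV, hs0, hstau⟩ :=
    seed_step E n₀ hn₀ hpos k hS
  obtain ⟨hI2, hsub2, hstab2, ⟨r₂, hq2, hfr2⟩⟩ :=
    serve_step E n₀ hn₀ hpos k hI1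
  have hfull : stepFull E n₀ k S = stepServe E n₀ k (stepSeed E n₀ k S) := rfl
  rw [hfull]
  refine ⟨hI2, hsub1.trans hsub2, ?_, ?_, ?_, hs0, ?_⟩
  · intro x ⟨y, hy, hy0, hR⟩
    rw [hstab2 x ⟨y, hsub1 hy, hy0, hR⟩, hstab1 x ⟨y, hy, hy0, hR⟩]
  · rcases hSq : S.q with _ | ⟨a, l⟩
    · refine ⟨r₁.tail ++ r₂, ?_, ?_⟩
      · rw [hq2, hq1, hSq, List.nil_append, List.tail_nil, List.nil_append]
      · intro t ht y hy hy0
        rcases List.mem_append.mp ht with ht | ht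
        · exact hfr1 t (List.mem_of_mem_tail ht) y hy hy0
        · exact hfr2 t ht y (hsub1 hy) hy0
    · refine ⟨r₁ ++ r₂, ?_, ?_⟩
      · rw [hq2, hq1, hSq, List.cons_append, List.tail_cons, List.tail_cons,
          List.append_assoc]
      · intro t ht y hy hy0
        rcases List.mem_append.mp ht with ht | ht
        · exact hfr1 t ht y hy hy0
        · exact hfr2 t ht y (hsub1 hy) hy0
  · exact hsub2 hsV
  · rw [hstab2 (seed S.B) ⟨seed S.B, hsV, hs0, R_refl _⟩, hstau]

include hn₀ hpos in
lemma stage_inv : ∀ k, InvSt E (stage E n₀ k) := by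
  intro k
  induction k with
  | zero => exact inv_init E n₀ hn₀
  | succ k ih => exact (full_step E n₀ hn₀ hpos k ih).1

include hn₀ hpos in
lemma stage_mono {k k' : ℕ} (h : k ≤ k') :
    (stage E n₀ k).V ⊆ (stage E n₀ k').V := by
  induction k' with
  | zero => rw [Nat.le_zero.mp h]
  | succ m ih =>
      rcases Nat.lt_or_ge k (m+1) with hlt | hge
      · exact (ih (by omega)).trans
          (full_step E n₀ hn₀ hpos m (stage_inv E n₀ hn₀ hpos m)).2.1
      · rw [Nat.le_antisymm h hge]

include hn₀ hpos in
lemma tau_stab {k k' : ℕ} (hkk : k ≤ k') {h : Gtwo}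
    (hh : h ∈ (stage E n₀ k).V) (h0 : h ≠ 0) :
    (stage E n₀ k').tau h = (stage E n₀ k).tau h := by
  induction k' with
  | zero => rw [Nat.le_zero.mp hkk]
  | succ m ih =>
      rcases Nat.lt_or_ge k (m+1) with hlt | hge
      · have hkm : k ≤ m := by omega
        have : (stage E n₀ (m+1)).tau h = (stage E n₀ m).tau h := by
          apply (full_step E n₀ hn₀ hpos m (stage_inv E n₀ hn₀ hpos m)).2.2.1
          exact ⟨h, stage_mono E n₀ hn₀ hpos hkm hh, h0, R_refl _⟩
        rw [this, ih hkm]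
      · rw [Nat.le_antisymm hkk hge]

include hn₀ hpos in
lemma queue_drop {k : ℕ} {h : Gtwo} (hh : h ∈ (stage E n₀ k).V) (h0 : h ≠ 0) :
    ∀ i, ∃ r, (stage E n₀ (k+i)).q = (stage E n₀ k).q.drop i ++ r ∧
      ∀ t ∈ r, ¬ R t h := by
  intro i
  induction i with
  | zero => exact ⟨[], by simp, fun t ht => absurd ht List.not_mem_nil⟩
  | succ i ih =>
      obtain ⟨r, hr, hfr⟩ := ih
      obtain ⟨r₂, hq2, hfr2⟩ :=
        (full_step E n₀ hn₀ hpos (k+i) (stage_inv E n₀ hn₀ hpos (k+i))).2.2.2.1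
      have hstep : stage E n₀ (k+(i+1)) = stepFull E n₀ (k+i) (stage E n₀ (k+i)) := rfl
      have hfr2' : ∀ t ∈ r₂, ¬ R t h :=
        fun t ht => hfr2 t ht h (stage_mono E n₀ hn₀ hpos (Nat.le_add_right k i) hh) h0
      rcases hdi : (stage E n₀ k).q.drop i with _ | ⟨a, l⟩
      · refine ⟨r.tail ++ r₂, ?_, ?_⟩
        · rw [hstep, hq2, hr, hdi, List.nil_append,
            show (stage E n₀ k).q.drop (i+1) = ((stage E n₀ k).q.drop i).tail from
              List.tail_drop.symm, hdi, List.tail_nil, List.nil_append]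
        · intro t ht
          rcases List.mem_append.mp ht with ht | ht
          · exact hfr t (List.mem_of_mem_tail ht)
          · exact hfr2' t ht
      · refine ⟨r ++ r₂, ?_, ?_⟩
        · rw [hstep, hq2, hr, hdi, List.cons_append, List.tail_cons,
            show (stage E n₀ k).q.drop (i+1) = ((stage E n₀ k).q.drop i).tail from
              List.tail_drop.symm, hdi, List.tail_cons, List.append_assoc]
        · intro t ht
          rcases List.mem_append.mp ht with ht | ht
          · exact hfr t ht
          · exact hfr2' t ht

include hn₀ hpos in
lemma tck_zero {k : ℕ} {h : Gtwo} (hh : h ∈ (stage E n₀ k).V) (h0 : h ≠ 0)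
    {k' : ℕ} (hk' : k + (stage E n₀ k).q.length ≤ k') :
    Tck (stage E n₀ k').q h = 0 := by
  obtain ⟨r, hr, hfr⟩ := queue_drop E n₀ hn₀ hpos hh h0 (k' - k)
  have hkk : k + (k' - k) = k' := by omega
  rw [hkk] at hr
  have hdrop : (stage E n₀ k).q.drop (k' - k) = [] :=
    List.drop_eq_nil_of_le (by omega)
  rw [hr, hdrop, List.nil_append]
  exact Tck_eq_zero hfr

def Hcar : Set Gtwo := {x | ∃ m, x ∈ (stage E n₀ m).V}

include hn₀ hpos in
lemma ncard_limit {k : ℕ} {h : Gtwo} (hh : h ∈ (stage E n₀ k).V) (h0 : h ≠ 0) :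
    (ISet (Hcar E n₀) h).Finite ∧
    (ISet (Hcar E n₀) h).ncard = (stage E n₀ k).tau h := by
  set K := k + (stage E n₀ k).q.length with hK
  have hkK : k ≤ K := by omega
  have hhK : h ∈ (stage E n₀ K).V := stage_mono E n₀ hn₀ hpos hkK hh
  have hcard : ∀ k', K ≤ k' →
      (ISet ↑(stage E n₀ k').V h).ncard = (stage E n₀ k).tau h := by
    intro k' hk'
    have hhk' : h ∈ (stage E n₀ k').V := stage_mono E n₀ hn₀ hpos (hkK.trans hk') hh
    have := (stage_inv E n₀ hn₀ hpos k').cnt h hhk' h0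
    rw [tck_zero E n₀ hn₀ hpos hh h0 (by omega),
      tau_stab E n₀ hn₀ hpos (hkK.trans hk') hh h0] at this
    omega
  have hIeq : ∀ k', K ≤ k' →
      ISet ↑(stage E n₀ k').V h = ISet ↑(stage E n₀ K).V h := by
    intro k' hk'
    symm
    apply Set.eq_of_subset_of_ncard_le
    · exact ISet_mono (stage_mono E n₀ hn₀ hpos hk') h
    · rw [hcard k' hk', hcard K (le_refl K)]
    · exact ISet_finite (stage_inv E n₀ hn₀ hpos k').bdd h0
  have hIH : ISet (Hcar E n₀) h = ISet ↑(stage E n₀ K).V h := by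
    ext j
    simp only [ISet, Hcar, Set.mem_setOf_eq, Finset.mem_coe]
    constructor
    · rintro ⟨m, hm⟩
      rcases Nat.le_total m K with hmK | hKm
      · exact stage_mono E n₀ hn₀ hpos hmK hm
      · have hmem : j ∈ ISet ↑(stage E n₀ m).V h := hm
        rw [hIeq m hKm] at hmem
        exact hmem
    · intro hj
      exact ⟨K, hj⟩
  rw [hIH]
  exact ⟨ISet_finite (stage_inv E n₀ hn₀ hpos K).bdd h0, hcard K (le_refl K)⟩

include hn₀ hpos in
lemma realize (k : ℕ) :
    seed (stage E n₀ k).B ∈ (stage E n₀ (k+1)).V ∧ seed (stage E n₀ k).B ≠ 0 ∧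
    (stage E n₀ (k+1)).tau (seed (stage E n₀ k).B) = tgt E n₀ k := by
  have hstep : stage E n₀ (k+1) = stepFull E n₀ k (stage E n₀ k) := rfl
  rw [hstep]
  exact (full_step E n₀ hn₀ hpos k (stage_inv E n₀ hn₀ hpos k)).2.2.2.2

end

noncomputable section
open Classical
attribute [local instance] Classical.propDecidable

/-- For every nonempty set `E` of positive integers there exists a subgroup
`H` of `G₂` such that for every nonzero `h ∈ H` the set `{σ^i(h) : i ∈ ℤ} ∩ H` is finite,
and `L(G₂,H,σ) = E`. -/
theorem stmt_1 (E : Set ℕ) (hne : E.Nonempty) (hpos : ∀ n ∈ E, 0 < n) :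
    ∃ H : AddSubgroup Gtwo,
      (∀ h ∈ H, h ≠ 0 →
        ({g : Gtwo | g ∈ H ∧ ∃ i : ℤ, g = (i • shiftAut) h}).Finite) ∧
      {n : ℕ | ∃ h ∈ H, h ≠ 0 ∧
          ({g : Gtwo | g ∈ H ∧ ∃ i : ℤ, g = (i • shiftAut) h}).Finite ∧
          ({g : Gtwo | g ∈ H ∧ ∃ i : ℤ, g = (i • shiftAut) h}).ncard = n} = E := by
  obtain ⟨n₀, hn₀⟩ := hne
  have hkey : ∀ (h : Gtwo), h ≠ 0 → ∀ m, h ∈ (stage E n₀ m).V →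
      ({g : Gtwo | (∃ k, g ∈ (stage E n₀ k).V) ∧ ∃ i : ℤ, g = (i • shiftAut) h}).Finite ∧
      ({g : Gtwo | (∃ k, g ∈ (stage E n₀ k).V) ∧ ∃ i : ℤ, g = (i • shiftAut) h}).ncard
        = (stage E n₀ m).tau h := by
    intro h h0 m hm
    have hlim := ncard_limit E n₀ hn₀ hpos hm h0
    have hOeq : {g : Gtwo | (∃ k, g ∈ (stage E n₀ k).V) ∧ ∃ i : ℤ, g = (i • shiftAut) h}
        = (fun i => sh i h) '' ISet (Hcar E n₀) h := by
      ext g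
      simp only [Set.mem_setOf_eq, Set.mem_image]
      constructor
      · rintro ⟨hgH, i, rfl⟩
        exact ⟨i, hgH, rfl⟩
      · rintro ⟨i, hi, rfl⟩
        exact ⟨hi, i, rfl⟩
    rw [hOeq]
    have hinj : Set.InjOn (fun i => sh i h) (ISet (Hcar E n₀) h) :=
      fun i _ j _ hij => R_unique h0 hij
    exact ⟨hlim.1.image _, by rw [Set.ncard_image_of_injOn hinj, hlim.2]⟩
  refine ⟨{ carrier := {x | ∃ k, x ∈ (stage E n₀ k).V},
            add_mem' := ?_, zero_mem' := ?_, neg_mem' := ?_ }, ?_, ?_⟩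
  · rintro a b ⟨m1, h1⟩ ⟨m2, h2⟩
    exact ⟨max m1 m2,
      (stage_inv E n₀ hn₀ hpos (max m1 m2)).grp.2 a
        (stage_mono E n₀ hn₀ hpos (le_max_left m1 m2) h1) b
        (stage_mono E n₀ hn₀ hpos (le_max_right m1 m2) h2)⟩
  · exact ⟨0, (stage_inv E n₀ hn₀ hpos 0).grp.1⟩
  · rintro a ⟨m, hm⟩
    rw [gtwo_neg]
    exact ⟨m, hm⟩
  · intro h hh h0
    obtain ⟨m, hm⟩ := hh
    exact (hkey h h0 m hm).1
  · ext n
    simp only [Set.mem_setOf_eq]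
    constructor
    · rintro ⟨h, hh, h0, hfin, hcard⟩
      obtain ⟨m, hm⟩ := hh
      simp only [AddSubgroup.mem_mk, AddSubmonoid.mem_mk, AddSubsemigroup.mem_mk,
        Set.mem_setOf_eq] at hcard
      rw [(hkey h h0 m hm).2] at hcard
      rw [← hcard]
      exact (stage_inv E n₀ hn₀ hpos m).tauE h
    · intro hnE
      obtain ⟨hsV, hs0, hstau⟩ := realize E n₀ hn₀ hpos n
      have htgt : tgt E n₀ n = n := if_pos hnE
      refine ⟨seed (stage E n₀ n).B, ⟨n+1, hsV⟩, hs0,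
        (hkey _ hs0 (n+1) hsV).1, ?_⟩
      simp only [AddSubgroup.mem_mk, AddSubmonoid.mem_mk, AddSubsemigroup.mem_mk,
        Set.mem_setOf_eq]
      rw [(hkey _ hs0 (n+1) hsV).2, hstau, htgt]

end
end

section
/- The set 𝒢 is a countable dense subgroup of Ĝ₂, and every finitely generated subgroup of 𝒢 is finite. -/
/-- `G₂` carries the discrete topology. -/
instance : TopologicalSpace Gtwo := ⊥
instance : DiscreteTopology Gtwo := ⟨rfl⟩

/-- The Pontryagin dual `Ĝ₂` of `G₂`: continuous characters with values in the circle group,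
with the compact-open topology. -/
abbrev DualGtwo : Type := PontryaginDual (Multiplicative Gtwo)

/-- `𝒢_m := { a ∈ Ĝ₂ : a ∘ σ^m = a }`. -/
def Gm (m : ℕ) : Set DualGtwo :=
  {a | ∀ g : Gtwo, a (Multiplicative.ofAdd ((m • shiftAut) g)) = a (Multiplicative.ofAdd g)}

/-- `𝒢 := ⋃_{m ≥ 1} 𝒢_m`. -/
def curlyG : Set DualGtwo := ⋃ m ∈ {m : ℕ | 1 ≤ m}, Gm m

namespace Stmt3Aux

open Finsupp Multiplicative Filter

noncomputable section

/-- abbreviation for the character value on a single. -/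
abbrev sgl (i : ℤ) (c : ZMod 2) : Multiplicative Gtwo :=
  Multiplicative.ofAdd (Finsupp.single i c)

lemma mul_self_eq_one (x : Multiplicative Gtwo) : x * x = 1 := by
  have : x.toAdd + x.toAdd = 0 := by
    ext i
    simp [Finsupp.add_apply, CharTwo.add_self_eq_zero]
  calc x * x = Multiplicative.ofAdd (x.toAdd + x.toAdd) := rfl
    _ = 1 := by rw [this]; rfl

lemma a_sq (a : DualGtwo) (x : Multiplicative Gtwo) : a x * a x = 1 := by
  rw [← map_mul, mul_self_eq_one, map_one]

lemma a_mul_self (a : DualGtwo) : a * a = 1 :=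
  ContinuousMonoidHom.ext fun x => a_sq a x

lemma a_inv (a : DualGtwo) : a⁻¹ = a :=
  inv_eq_of_mul_eq_one_right (a_mul_self a)

lemma apply_eq_prod (a : DualGtwo) (g : Gtwo) :
    a (Multiplicative.ofAdd g) = g.prod fun i c => a (sgl i c) := by
  conv_lhs => rw [← Finsupp.sum_single g]
  rw [Finsupp.sum, ofAdd_sum, map_prod, Finsupp.prod]

lemma ext_of_singles {a b : DualGtwo} (h : ∀ i c, a (sgl i c) = b (sgl i c)) : a = b := by
  refine PontryaginDual.ext fun x => ?_
  have hx : x = Multiplicative.ofAdd x.toAdd := rfl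
  rw [hx, apply_eq_prod, apply_eq_prod]
  exact Finset.prod_congr rfl fun i _ => h i _

lemma shift_pow_apply (m : ℕ) (g : Gtwo) :
    (m • shiftAut) g = Finsupp.equivMapDomain (Equiv.subRight (m : ℤ)) g := by
  induction m generalizing g with
  | zero =>
      ext i
      simp [Finsupp.equivMapDomain_apply, Equiv.subRight]
  | succ n ih =>
      have h : ((n + 1) • shiftAut) g = (n • shiftAut) (shiftAut g) := by
        rw [succ_nsmul]; rfl
      rw [h, ih (shiftAut g)]
      ext i
      simp only [Finsupp.equivMapDomain_apply, Equiv.subRight_symm_apply, shiftAut,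
        Finsupp.domCongr_apply]
      push_cast
      ring_nf

lemma shift_pow_single (m : ℕ) (i : ℤ) (c : ZMod 2) :
    (m • shiftAut) (Finsupp.single i c) = Finsupp.single (i - m) c := by
  rw [shift_pow_apply, Finsupp.equivMapDomain_single]
  rfl

lemma mem_Gm_iff {m : ℕ} {a : DualGtwo} :
    a ∈ Gm m ↔ ∀ (i : ℤ) (c : ZMod 2), a (sgl (i - m) c) = a (sgl i c) := by
  constructor
  · intro h i c
    have := h (Finsupp.single i c)
    rwa [shift_pow_single] at this
  · intro h g
    rw [show (Multiplicative.ofAdd ((m • shiftAut) g)) =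
        Multiplicative.ofAdd (Finsupp.equivMapDomain (Equiv.subRight (m : ℤ)) g) by
      rw [shift_pow_apply]]
    rw [apply_eq_prod, apply_eq_prod, Finsupp.prod_equivMapDomain]
    exact Finsupp.prod_congr fun i _ => h i (g i)

lemma Gm_shift_up {m : ℕ} {a : DualGtwo} (ha : a ∈ Gm m) (i : ℤ) (c : ZMod 2) :
    a (sgl (i + m) c) = a (sgl i c) := by
  have := mem_Gm_iff.mp ha (i + m) c
  rw [add_sub_cancel_right] at this
  exact this.symm

lemma Gm_int_shift {m : ℕ} {a : DualGtwo} (ha : a ∈ Gm m) (q : ℤ) (i : ℤ) (c : ZMod 2) :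
    a (sgl (i + q * m) c) = a (sgl i c) := by
  induction q using Int.induction_on with
  | zero => simp
  | succ k ih =>
      have h1 : i + ((k : ℤ) + 1) * m = (i + k * m) + m := by ring
      rw [h1, Gm_shift_up ha, ih]
  | pred k ih =>
      have h1 : i + (-(k : ℤ) - 1) * m = (i + (-(k : ℤ)) * m) - m := by ring
      rw [h1, mem_Gm_iff.mp ha, ih]

lemma Gm_mul_subset {m k : ℕ} {a : DualGtwo} (ha : a ∈ Gm m) : a ∈ Gm (m * k) := by
  refine mem_Gm_iff.mpr fun i c => ?_
  have h1 : i - ((m * k : ℕ) : ℤ) = i + (-(k : ℤ)) * m := by push_cast; ring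
  rw [h1, Gm_int_shift ha]

lemma one_mem_Gm (m : ℕ) : (1 : DualGtwo) ∈ Gm m := by
  intro g
  rfl

lemma mul_mem_Gm {m n : ℕ} {a b : DualGtwo} (ha : a ∈ Gm m) (hb : b ∈ Gm n) :
    a * b ∈ Gm (m * n) := by
  have ha' : a ∈ Gm (m * n) := Gm_mul_subset ha
  have hb' : b ∈ Gm (m * n) := by rw [mul_comm]; exact Gm_mul_subset hb
  intro g
  have h1 : (a * b) (Multiplicative.ofAdd (((m * n) • shiftAut) g))
      = a (Multiplicative.ofAdd (((m * n) • shiftAut) g))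
        * b (Multiplicative.ofAdd (((m * n) • shiftAut) g)) := rfl
  have h2 : (a * b) (Multiplicative.ofAdd g)
      = a (Multiplicative.ofAdd g) * b (Multiplicative.ofAdd g) := rfl
  rw [h1, h2, ha' g, hb' g]

lemma mem_curlyG_iff {a : DualGtwo} : a ∈ curlyG ↔ ∃ m : ℕ, 1 ≤ m ∧ a ∈ Gm m := by
  simp [curlyG, Set.mem_iUnion₂]

/-- `curlyG` as a subgroup. -/
def SG : Subgroup DualGtwo where
  carrier := curlyG
  one_mem' := mem_curlyG_iff.mpr ⟨1, le_refl 1, one_mem_Gm 1⟩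
  mul_mem' := by
    intro a b ha hb
    obtain ⟨m, hm, ham⟩ := mem_curlyG_iff.mp ha
    obtain ⟨n, hn, hbn⟩ := mem_curlyG_iff.mp hb
    exact mem_curlyG_iff.mpr ⟨m * n, Nat.one_le_iff_ne_zero.mpr (by positivity),
      mul_mem_Gm ham hbn⟩
  inv_mem' := by
    intro a ha
    rwa [a_inv]

lemma char_single_pow (a : DualGtwo) (i : ℤ) (c : ZMod 2) :
    a (sgl i c) = a (sgl i 1) ^ c.val := by
  rcases (by decide : ∀ c : ZMod 2, c = 0 ∨ c = 1) c with rfl | rfl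
  · have h0 : sgl i (0 : ZMod 2) = 1 := by
      show Multiplicative.ofAdd (Finsupp.single i (0 : ZMod 2)) = 1
      rw [Finsupp.single_zero]; rfl
    rw [h0, map_one]
    norm_num [ZMod.val_zero]
  · have : ((1 : ZMod 2)).val = 1 := rfl
    rw [this, pow_one]

lemma circle_pm_one {x : Circle} (hx : x * x = 1) : (x : ℂ) = 1 ∨ (x : ℂ) = -1 := by
  have h : (x : ℂ) * (x : ℂ) = 1 := by
    have := congrArg (fun z : Circle => (z : ℂ)) hx
    simpa using this
  have h2 : ((x : ℂ) - 1) * ((x : ℂ) + 1) = 0 := by ring_nf; linear_combination h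
  rcases mul_eq_zero.mp h2 with h3 | h3
  · left; exact sub_eq_zero.mp h3
  · right; exact eq_neg_of_add_eq_zero_left h3

lemma Gm_reduce {m : ℕ} (hm : 1 ≤ m) {a : DualGtwo} (ha : a ∈ Gm m) (i : ℤ) (c : ZMod 2) :
    a (sgl i c) = a (sgl (i % (m : ℤ)) c) := by
  have hmZ : (0 : ℤ) < (m : ℤ) := by exact_mod_cast hm
  have h1 : i % (m : ℤ) + (i / (m : ℤ)) * (m : ℤ) = i := by
    rw [mul_comm]
    exact Int.emod_add_mul_ediv i m
  conv_lhs => rw [← h1]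
  rw [Gm_int_shift ha]

lemma Gm_countable {m : ℕ} (hm : 1 ≤ m) : (Gm m).Countable := by
  have hmZ : (0 : ℤ) < (m : ℤ) := by exact_mod_cast hm
  rw [← Set.countable_coe_iff]
  refine Function.Injective.countable
    (f := fun a : Gm m => fun j : Fin m => decide ((a.1 (sgl (j : ℤ) 1) : ℂ) = 1)) ?_
  rintro ⟨a, ha⟩ ⟨b, hb⟩ hab
  refine Subtype.ext (ext_of_singles fun i c => ?_)
  rw [char_single_pow a, char_single_pow b]
  congr 1
  -- reduce to 0 ≤ r < m
  rw [Gm_reduce hm ha, Gm_reduce hm hb]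
  set r : ℤ := i % (m : ℤ) with hr
  have hr0 : 0 ≤ r := Int.emod_nonneg i (by omega)
  have hrm : r < (m : ℤ) := Int.emod_lt_of_pos i hmZ
  have hrn : r.toNat < m := by omega
  have hcast : ((⟨r.toNat, hrn⟩ : Fin m) : ℤ) = r := by
    simp [Int.toNat_of_nonneg hr0]
  have := congrFun hab ⟨r.toNat, hrn⟩
  simp only [hcast] at this
  have hiff : ((a (sgl r 1) : ℂ) = 1) ↔ ((b (sgl r 1) : ℂ) = 1) := by
    simpa [decide_eq_decide] using this
  have haval := circle_pm_one (a_sq a (sgl r 1))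
  have hbval := circle_pm_one (a_sq b (sgl r 1))
  apply Subtype.ext
  by_cases hcase : (a (sgl r 1) : ℂ) = 1
  · rw [hcase, (hiff.mp hcase).symm]
  · have hb1 : ¬ ((b (sgl r 1) : ℂ) = 1) := fun h => hcase (hiff.mpr h)
    rcases haval with h | h
    · exact absurd h hcase
    · rcases hbval with h' | h'
      · exact absurd h' hb1
      · rw [h, h']

lemma curlyG_countable : curlyG.Countable := by
  refine Set.Countable.biUnion (Set.to_countable _) fun m hm => Gm_countable hm

/-- pow lemma mod 2 -/
lemma pow_val_add (x : Circle) (hx : x * x = 1) (c d : ZMod 2) :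
    x ^ (c + d).val = x ^ c.val * x ^ d.val := by
  have h2 : x ^ 2 = 1 := by rw [sq]; exact hx
  have key : ∀ k : ℕ, x ^ k = x ^ (k % 2) := by
    intro k
    conv_lhs => rw [← Nat.mod_add_div k 2, pow_add, pow_mul, h2, one_pow, mul_one]
  rw [← pow_add, key ((c + d).val), key (c.val + d.val), ZMod.val_add]
  congr 1
  omega

/-- Build a character from a choice of values on the singles. -/
def mkChar (ε : ℤ → Circle) (hε : ∀ i, ε i * ε i = 1) : DualGtwo where
  toFun x := x.toAdd.prod fun i c => ε i ^ c.val
  map_one' := Finsupp.prod_zero_index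
  map_mul' x y := by
    show ((x * y).toAdd).prod (fun i c => ε i ^ c.val)
        = (x.toAdd).prod (fun i c => ε i ^ c.val) * (y.toAdd).prod (fun i c => ε i ^ c.val)
    exact Finsupp.prod_add_index'
      (fun i => by rw [show (0 : ZMod 2).val = 0 from rfl, pow_zero])
      (fun i c d => pow_val_add (ε i) (hε i) c d)
  continuous_toFun := continuous_of_discreteTopology

lemma mkChar_single (ε : ℤ → Circle) (hε : ∀ i, ε i * ε i = 1) (i : ℤ) (c : ZMod 2) :
    mkChar ε hε (sgl i c) = ε i ^ c.val := by
  show (Finsupp.single i c).prod (fun i c => ε i ^ c.val) = ε i ^ c.val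
  rw [Finsupp.prod_single_index]
  rw [show (0 : ZMod 2).val = 0 from rfl, pow_zero]

@[simp] lemma toCM_apply (f : DualGtwo) (x : Multiplicative Gtwo) :
    f.toContinuousMap x = f x := rfl

lemma curlyG_dense : Dense curlyG := by
  intro a
  set ε : ℕ → ℤ → Circle := fun N i => a (sgl ((i + N) % ((2 * N + 1 : ℕ) : ℤ) - N) 1) with hε
  have hεsq : ∀ N i, ε N i * ε N i = 1 := fun N i => a_sq a _
  set b : ℕ → DualGtwo := fun N => mkChar (ε N) (hεsq N) with hb
  have hper : ∀ N i, ε N (i - ((2 * N + 1 : ℕ) : ℤ)) = ε N i := by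
    intro N i
    have : (i - ((2 * N + 1 : ℕ) : ℤ) + N) % ((2 * N + 1 : ℕ) : ℤ)
        = (i + N) % ((2 * N + 1 : ℕ) : ℤ) := by
      have h1 : i - ((2 * N + 1 : ℕ) : ℤ) + N = (i + N) - ((2 * N + 1 : ℕ) : ℤ) := by ring
      rw [h1, Int.sub_emod, Int.emod_self, sub_zero, Int.emod_emod_of_dvd _ dvd_rfl]
    simp only [hε, this]
  have hbmem : ∀ N, b N ∈ curlyG := by
    intro N
    refine mem_curlyG_iff.mpr ⟨2 * N + 1, by omega, mem_Gm_iff.mpr fun i c => ?_⟩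
    rw [hb]
    rw [mkChar_single, mkChar_single, hper]
  have hagree : ∀ (N : ℕ) (g : Gtwo), (∀ i ∈ g.support, i.natAbs ≤ N) →
      b N (Multiplicative.ofAdd g) = a (Multiplicative.ofAdd g) := by
    intro N g hg
    rw [apply_eq_prod (b N), apply_eq_prod a]
    refine Finsupp.prod_congr fun i hi => ?_
    have hbound := hg i hi
    have hi1 : (0 : ℤ) ≤ i + N := by omega
    have hi2 : i + (N : ℤ) < ((2 * N + 1 : ℕ) : ℤ) := by
      push_cast; omega
    have hεval : ε N i = a (sgl i 1) := by
      simp only [hε]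
      rw [Int.emod_eq_of_lt hi1 hi2]
      congr 1
      push_cast
      ring_nf
    rw [hb, mkChar_single, hεval, ← char_single_pow]
  -- tendsto
  have htend : Tendsto b atTop (nhds a) := by
    refine (ContinuousMonoidHom.isInducing_toContinuousMap _ _).tendsto_nhds_iff.mpr ?_
    rw [ContinuousMap.tendsto_compactOpen_iff_forall]
    intro K hK
    have hKfin : K.Finite := hK.finite DiscreteTopology.isDiscrete
    set N₀ : ℕ := hKfin.toFinset.sup fun x => x.toAdd.support.sup fun i => i.natAbs with hN₀
    refine Tendsto.congr' ?_ tendsto_const_nhds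
    filter_upwards [Filter.eventually_ge_atTop N₀] with N hN
    ext ⟨x, hx⟩
    simp only [Function.comp_apply, ContinuousMap.restrict_apply]
    have hsupp : ∀ i ∈ x.toAdd.support, i.natAbs ≤ N := by
      intro i hi
      have h1 : i.natAbs ≤ x.toAdd.support.sup (fun i => i.natAbs) := Finset.le_sup hi
      have h2 : x.toAdd.support.sup (fun i => i.natAbs) ≤ N₀ := by
        rw [hN₀]
        exact Finset.le_sup
          (f := fun y : Multiplicative Gtwo => y.toAdd.support.sup fun i => i.natAbs)
          (hKfin.mem_toFinset.mpr hx)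
      omega
    have := (hagree N x.toAdd hsupp).symm
    exact congrArg (fun z : Circle => (z : ℂ)) this
  exact mem_closure_of_tendsto htend (Filter.Eventually.of_forall hbmem)

lemma fg_finite (F : Finset DualGtwo) :
    ((Subgroup.closure (F : Set DualGtwo) : Subgroup DualGtwo) : Set DualGtwo).Finite := by
  have htors : Monoid.IsTorsion ↥(Subgroup.closure (F : Set DualGtwo)) := by
    intro x
    refine isOfFinOrder_iff_pow_eq_one.mpr ⟨2, two_pos, ?_⟩
    apply Subtype.ext
    have : ((x ^ 2 : ↥(Subgroup.closure (F : Set DualGtwo))) : DualGtwo)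
        = (x : DualGtwo) ^ 2 := by push_cast; ring
    rw [this, sq, a_mul_self]
    rfl
  have : Finite ↥(Subgroup.closure (F : Set DualGtwo)) :=
    CommGroup.finite_of_fg_torsion _ htors
  exact Set.finite_coe_iff.mp this

end

end Stmt3Aux

/-- `𝒢` is a countable dense subgroup of `Ĝ₂`, and every finitely generated
subgroup of `𝒢` is finite. -/
theorem stmt_3 :
    curlyG.Countable ∧ Dense curlyG ∧
      (∃ S : Subgroup DualGtwo, (S : Set DualGtwo) = curlyG) ∧
      (∀ F : Finset DualGtwo, (F : Set DualGtwo) ⊆ curlyG →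
        ((Subgroup.closure (F : Set DualGtwo) : Subgroup DualGtwo) : Set DualGtwo).Finite) := by
  exact ⟨Stmt3Aux.curlyG_countable, Stmt3Aux.curlyG_dense, ⟨Stmt3Aux.SG, rfl⟩,
    fun F _ => Stmt3Aux.fg_finite F⟩
end
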